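/- arXiv:1505.07229 — 9 statements merged into one kernel-verified Lean document; each statement's English description precedes it below -/
import Mathlib

section
/- Let n ≥ 1 be an integer and let ω ∈ ℂ be a root of unity of order 3, 4, or 6. Then C_n(ω)/ω^n is an integer, i.e. there exists m ∈ ℤ with C_n(ω) = m·ω^n. -/
/-- The coefficients `c_{n,i}` from the paper. -/
def cCoeff (n i : ℕ) : ℤ :=
  if i = 0 then
    ∑ k ∈ Finset.Icc 1 (2 * n), if 2 * n = k * (k + 1) then 2 * (-1 : ℤ) ^ k else 0
  else
    ∑ k ∈ Finset.Icc 1 (2 * n),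
      ((if 2 * n = k * (k + 2 * i + 1) then (-1 : ℤ) ^ k else 0) +
        (if 2 * n = k * (k + 2 * i - 1) then (-1 : ℤ) ^ (k - 1) else 0))

/-- The polynomial `C_n(X) = c_{n,0} X^n + ∑_{i=1}^n c_{n,i} (X^{n+i} + X^{n-i}) ∈ ℤ[X]`. -/
noncomputable def Cpoly (n : ℕ) : Polynomial ℤ :=
  Polynomial.C (cCoeff n 0) * Polynomial.X ^ n +
    ∑ i ∈ Finset.Icc 1 n,
      Polynomial.C (cCoeff n i) * (Polynomial.X ^ (n + i) + Polynomial.X ^ (n - i))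

lemma key_seq (ω : ℂ) (t : ℤ) (ht : ω ^ 2 + 1 = (t : ℂ) * ω) :
    ∀ i : ℕ, ∃ m : ℤ, ω ^ (2 * i) + 1 = (m : ℂ) * ω ^ i := by
  have H : ∀ i : ℕ, (∃ m : ℤ, ω ^ (2 * i) + 1 = (m : ℂ) * ω ^ i) ∧
      (∃ m : ℤ, ω ^ (2 * (i + 1)) + 1 = (m : ℂ) * ω ^ (i + 1)) := by
    intro i
    induction i with
    | zero =>
      refine ⟨⟨2, by norm_num⟩, ⟨t, by simpa using ht⟩⟩
    | succ i ih =>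
      obtain ⟨⟨m1, h1⟩, ⟨m2, h2⟩⟩ := ih
      refine ⟨⟨m2, h2⟩, ⟨t * m2 - m1, ?_⟩⟩
      push_cast
      linear_combination (t : ℂ) * ω * h2 - ω ^ 2 * h1 + (1 + ω ^ (2 * i + 2)) * ht
  exact fun i => (H i).1

theorem Cpoly_eval_root_of_unity (n : ℕ) (hn : 1 ≤ n) (ω : ℂ)
    (hω : orderOf ω = 3 ∨ orderOf ω = 4 ∨ orderOf ω = 6) :
    ∃ m : ℤ, Polynomial.aeval ω (Cpoly n) = (m : ℂ) * ω ^ n := by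
  obtain ⟨t, ht⟩ : ∃ t : ℤ, ω ^ 2 + 1 = (t : ℂ) * ω := by
    rcases hω with h | h | h
    · have h3 : ω ^ 3 = 1 := by rw [← h]; exact pow_orderOf_eq_one ω
      have h1 : ω ≠ 1 := by
        intro e; rw [e, orderOf_one] at h; norm_num at h
      have hf : (ω - 1) * (ω ^ 2 + ω + 1) = 0 := by linear_combination h3
      rcases mul_eq_zero.mp hf with hc | hc
      · exact absurd (sub_eq_zero.mp hc) h1
      · exact ⟨-1, by push_cast; linear_combination hc⟩
    · have h4 : ω ^ 4 = 1 := by rw [← h]; exact pow_orderOf_eq_one ω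
      have h2 : ω ^ 2 ≠ 1 := by
        intro e
        have := orderOf_dvd_of_pow_eq_one e
        rw [h] at this; omega
      have hf : (ω ^ 2 - 1) * (ω ^ 2 + 1) = 0 := by linear_combination h4
      rcases mul_eq_zero.mp hf with hc | hc
      · exact absurd (sub_eq_zero.mp hc) h2
      · exact ⟨0, by push_cast; linear_combination hc⟩
    · have h6 : ω ^ 6 = 1 := by rw [← h]; exact pow_orderOf_eq_one ω
      have h3 : ω ^ 3 ≠ 1 := by
        intro e
        have := orderOf_dvd_of_pow_eq_one e
        rw [h] at this; omega
      have h1 : ω + 1 ≠ 0 := by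
        intro e
        have e2 : ω ^ 2 = 1 := by linear_combination (ω - 1) * e
        have := orderOf_dvd_of_pow_eq_one e2
        rw [h] at this; omega
      have hf : (ω ^ 3 - 1) * ((ω + 1) * (ω ^ 2 - ω + 1)) = 0 := by linear_combination h6
      rcases mul_eq_zero.mp hf with hc | hc
      · exact absurd (sub_eq_zero.mp hc) h3
      · rcases mul_eq_zero.mp hc with hc | hc
        · exact absurd hc h1
        · exact ⟨1, by push_cast; linear_combination hc⟩
  choose m hm using key_seq ω t ht
  refine ⟨cCoeff n 0 + ∑ i ∈ Finset.Icc 1 n, cCoeff n i * m i, ?_⟩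
  have hterm : ∀ i ∈ Finset.Icc 1 n, ω ^ (n + i) + ω ^ (n - i) = (m i : ℂ) * ω ^ n := by
    intro i hi
    have hin : i ≤ n := (Finset.mem_Icc.mp hi).2
    have e1 : n + i = (n - i) + 2 * i := by omega
    have e2 : ω ^ n = ω ^ (n - i) * ω ^ i := by
      rw [← pow_add]; congr 1; omega
    calc ω ^ (n + i) + ω ^ (n - i) = ω ^ (n - i) * (ω ^ (2 * i) + 1) := by
          rw [e1, pow_add]; ring
      _ = ω ^ (n - i) * ((m i : ℂ) * ω ^ i) := by rw [hm i]
      _ = (m i : ℂ) * ω ^ n := by rw [e2]; ring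
  rw [Cpoly]
  simp only [map_add, map_mul, map_pow, map_sum, Polynomial.aeval_C, Polynomial.aeval_X,
    eq_intCast, map_intCast]
  rw [Finset.sum_congr rfl (fun i hi => by rw [hterm i hi])]
  push_cast
  rw [add_mul, Finset.sum_mul]
  congr 1
  exact Finset.sum_congr rfl (fun i _ => by ring)
end

section
/- For every integer n ≥ 1, the polynomial (X−1)² divides C_n(X) in ℤ[X], and the quotient P_n(X) = C_n(X)/(X−1)² is a monic polynomial of degree 2n−2 all of whose coefficients are non-negative integers. -/
/-!
Let `t_i` be the signed count `∑ (-1)^(k+1)` over the `k ≥ 1` with `k (k + 2i - 1) = 2n`. Then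
`c_{n,i} = t_i - t_{i+1}` for `i ≥ 1` and `c_{n,0} = -2 t_1`, so summation by parts gives
`C_n = ∑_{i=1}^n t_i (B_i - B_{i-1})` with `B_i = X^{n+i} + X^{n-i}`, and
`B_i - B_{i-1} = (X - 1)^2 (X^{n-i} + ⋯ + X^{n+i-2})`. Hence `P_n = ∑ t_i (X^{n-i} + ⋯ + X^{n+i-2})`,
whose top term `X^{2n-2}` comes only from `k = 1, i = n`.

The coefficient of `X^j` in `P_n` is a signed count of factorisations `2n = a b`, `a < b` of
opposite parity, whose index `(b - a + 1)/2` is large enough, with sign `+` iff `a` is odd.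
Moving the full power of `2` dividing `2n` from an even `a` to the odd `b` maps the negative
terms injectively to positive ones without decreasing the index, so the count is non-negative.
-/

open Polynomial Finset

theorem Finset.sum_Icc_sub_mul_eq {R : Type*} [CommRing R] (f g : ℕ → R) (n : ℕ) :
    ∑ i ∈ Icc 1 n, (f i - f (i + 1)) * g i =
      f 1 * g 0 - f (n + 1) * g n + ∑ i ∈ Icc 1 n, f i * (g i - g (i - 1)) := by
  induction n with
  | zero => simp
  | succ n ih =>
    rw [sum_Icc_succ_top (by omega), sum_Icc_succ_top (by omega), ih, Nat.add_sub_cancel]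
    ring

theorem pow_add_add_pow_sub_sub_eq_sq_mul {R : Type*} [CommRing R] (x : R) {n i : ℕ}
    (hi : 1 ≤ i) (hin : i ≤ n) :
    x ^ (n + i) + x ^ (n - i) - (x ^ (n + (i - 1)) + x ^ (n - (i - 1))) =
      (x - 1) ^ 2 * ∑ s ∈ Ico (n - i) (n + i - 1), x ^ s := by
  have hgeom := geom_sum_Ico_mul x (show n - i ≤ n + i - 1 by omega)
  have htop : x ^ (n + i) = x ^ (n + i - 1) * x := by rw [← pow_succ]; congr 1; omega
  have hbot : x ^ (n - (i - 1)) = x ^ (n - i) * x := by rw [← pow_succ]; congr 1; omega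
  rw [htop, hbot, show n + (i - 1) = n + i - 1 by omega]
  linear_combination (1 - x) * hgeom

def signedFactorCount (n i : ℕ) : ℤ :=
  ∑ k ∈ Icc 1 (2 * n), if 2 * n = k * (k + 2 * i - 1) then (-1) ^ (k + 1) else 0

theorem cCoeff_zero (n : ℕ) : cCoeff n 0 = -2 * signedFactorCount n 1 := by
  rw [cCoeff, if_pos rfl, signedFactorCount, mul_sum]
  refine sum_congr rfl fun k _ => ?_
  rw [show k + 2 * 1 - 1 = k + 1 by omega]
  split_ifs <;> ring

theorem cCoeff_eq_sub {n i : ℕ} (hi : 1 ≤ i) :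
    cCoeff n i = signedFactorCount n i - signedFactorCount n (i + 1) := by
  rw [cCoeff, if_neg (by omega), signedFactorCount, signedFactorCount, ← sum_sub_distrib]
  refine sum_congr rfl fun k hk => ?_
  obtain ⟨m, rfl⟩ : ∃ m, k = m + 1 := ⟨k - 1, by simp only [mem_Icc] at hk; omega⟩
  rw [show m + 1 + 2 * (i + 1) - 1 = m + 1 + 2 * i + 1 by omega, Nat.add_sub_cancel]
  split_ifs <;> ring

theorem signedFactorCount_eq_zero_of_lt {n i : ℕ} (h : n < i) : signedFactorCount n i = 0 := by
  refine sum_eq_zero fun k hk => if_neg ?_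
  simp only [mem_Icc] at hk
  have := Nat.mul_le_mul hk.1 (show 2 * i ≤ k + 2 * i - 1 by omega)
  omega

theorem signedFactorCount_self {n : ℕ} (hn : 1 ≤ n) : signedFactorCount n n = 1 := by
  rw [signedFactorCount, sum_eq_single 1]
  · simp
  · intro k hk hk1
    simp only [mem_Icc] at hk
    have := Nat.mul_le_mul (show 2 ≤ k by omega) (show 2 * n + 1 ≤ k + 2 * n - 1 by omega)
    exact if_neg (by omega)
  · simp only [mem_Icc]
    omega

theorem Cpoly_eq_sum (n : ℕ) :
    Cpoly n = ∑ i ∈ Icc 1 n, C (signedFactorCount n i) *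
      (X ^ (n + i) + X ^ (n - i) - (X ^ (n + (i - 1)) + X ^ (n - (i - 1)))) := by
  have hsum : ∑ i ∈ Icc 1 n, C (cCoeff n i) * (X ^ (n + i) + X ^ (n - i) : ℤ[X]) =
      ∑ i ∈ Icc 1 n, (C (signedFactorCount n i) - C (signedFactorCount n (i + 1))) *
        (X ^ (n + i) + X ^ (n - i)) :=
    sum_congr rfl fun i hi => by rw [cCoeff_eq_sub (mem_Icc.mp hi).1, map_sub]
  rw [Cpoly, hsum, sum_Icc_sub_mul_eq, cCoeff_zero,
    signedFactorCount_eq_zero_of_lt (Nat.lt_succ_self n)]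
  simp only [map_mul, map_neg, map_ofNat, map_zero, add_zero, Nat.sub_zero]
  ring

noncomputable def Ppoly (n : ℕ) : ℤ[X] :=
  ∑ i ∈ Icc 1 n, C (signedFactorCount n i) * ∑ s ∈ Ico (n - i) (n + i - 1), X ^ s

theorem Cpoly_eq_sq_mul_Ppoly (n : ℕ) : Cpoly n = (X - 1) ^ 2 * Ppoly n := by
  rw [Cpoly_eq_sum, Ppoly, mul_sum]
  refine sum_congr rfl fun i hi => ?_
  rw [pow_add_add_pow_sub_sub_eq_sq_mul _ (mem_Icc.mp hi).1 (mem_Icc.mp hi).2]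
  ring

theorem coeff_Ppoly (n j : ℕ) :
    (Ppoly n).coeff j =
      ∑ i ∈ Icc 1 n, if j ∈ Ico (n - i) (n + i - 1) then signedFactorCount n i else 0 := by
  simp [Ppoly, coeff_X_pow]

def oppParityPairs (M : ℕ) : Finset (ℕ × ℕ) :=
  (Nat.divisorsAntidiagonal M).filter fun p => p.1 < p.2 ∧ Odd (p.1 + p.2)

def pairIndex (p : ℕ × ℕ) : ℕ := (p.2 - p.1 + 1) / 2

theorem mem_oppParityPairs {M : ℕ} {p : ℕ × ℕ} :
    p ∈ oppParityPairs M ↔ p.1 * p.2 = M ∧ M ≠ 0 ∧ p.1 < p.2 ∧ Odd (p.1 + p.2) := by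
  simp [oppParityPairs, and_assoc]

theorem sum_ite_signedFactorCount (n : ℕ) (w : ℕ → Prop) [DecidablePred w] :
    ∑ i ∈ Icc 1 n, (if w i then signedFactorCount n i else 0) =
      ∑ p ∈ (oppParityPairs (2 * n)).filter (fun p => w (pairIndex p)), (-1) ^ (p.1 + 1) := by
  have hprod : ∑ i ∈ Icc 1 n, (if w i then signedFactorCount n i else 0) =
      ∑ q ∈ (Icc 1 n ×ˢ Icc 1 (2 * n)).filter
        (fun q => w q.1 ∧ 2 * n = q.2 * (q.2 + 2 * q.1 - 1)), (-1) ^ (q.2 + 1) := by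
    rw [sum_filter, sum_product]
    refine sum_congr rfl fun i _ => ?_
    by_cases h : w i <;> simp [h, signedFactorCount]
  rw [hprod]
  refine sum_nbij' (fun q => (q.2, q.2 + 2 * q.1 - 1)) (fun p => (pairIndex p, p.1))
    ?_ ?_ ?_ ?_ fun _ _ => rfl
  · intro q hq
    simp only [mem_filter, mem_product, mem_Icc] at hq
    rw [mem_filter, mem_oppParityPairs, pairIndex]
    refine ⟨⟨hq.2.2.symm, by omega, by omega, ⟨q.2 + q.1 - 1, by omega⟩⟩, ?_⟩
    convert hq.2.1 using 1
    omega
  · intro p hp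
    rw [mem_filter, mem_oppParityPairs, pairIndex] at hp
    obtain ⟨⟨hmul, hM, hlt, m, hm⟩, hw⟩ := hp
    have h1 : 1 ≤ p.1 := Nat.pos_of_ne_zero fun h => hM (by rw [← hmul, h, zero_mul])
    have h2 : p.2 ≤ 2 * n := Nat.le_of_dvd (by omega) ⟨p.1, by rw [← hmul, mul_comm]⟩
    simp only [mem_filter, mem_product, mem_Icc, pairIndex]
    refine ⟨⟨⟨by omega, by omega⟩, h1, by omega⟩, hw, ?_⟩
    rw [← hmul]
    congr 1
    omega
  · intro q hq
    simp only [mem_filter, mem_product, mem_Icc] at hq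
    exact Prod.ext (by dsimp only [pairIndex]; omega) rfl
  · intro p hp
    rw [mem_filter, mem_oppParityPairs] at hp
    obtain ⟨⟨-, -, hlt, m, hm⟩, -⟩ := hp
    exact Prod.ext rfl (by dsimp only [pairIndex]; omega)

theorem card_filter_even_le_card_filter_odd (M : ℕ) (w : ℕ → Prop) [DecidablePred w]
    (hw : Monotone w) :
    #{p ∈ (oppParityPairs M).filter (fun p => w (pairIndex p)) | Even p.1} ≤
      #{p ∈ (oppParityPairs M).filter (fun p => w (pairIndex p)) | ¬Even p.1} := by
  set q := 2 ^ M.factorization 2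
  have hq : 0 < q := by positivity
  refine card_le_card_of_injOn (fun p => (p.1 / q, q * p.2)) ?_ ?_
  · intro p hp
    rw [mem_coe, mem_filter, mem_filter, mem_oppParityPairs] at hp ⊢
    dsimp only
    obtain ⟨⟨⟨hmul, hM, hlt, hodd⟩, hwp⟩, heven⟩ := hp
    have hb : Odd p.2 := by simpa [Nat.odd_add', heven] using hodd
    have hqa : q ∣ p.1 :=
      (Nat.Coprime.pow_left _ (Nat.coprime_two_left.mpr hb)).dvd_of_dvd_mul_right
        (hmul ▸ Nat.ordProj_dvd M 2)
    have hmul' : p.1 / q * (q * p.2) = M := by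
      rw [← mul_assoc, Nat.div_mul_cancel hqa, hmul]
    have hodd' : ¬Even (p.1 / q) := by
      intro h
      refine Nat.not_dvd_ordCompl Nat.prime_two hM ?_
      change 2 ∣ M / q
      rw [← hmul, Nat.mul_div_right_comm hqa]
      exact Dvd.dvd.mul_right h.two_dvd _
    have heven' : Even (q * p.2) := by
      have : Even M := hmul ▸ heven.mul_right _
      rw [← hmul'] at this
      exact (Nat.even_mul.mp this).resolve_left hodd'
    have hle : p.1 / q ≤ p.1 := Nat.div_le_self _ _
    have hle' : p.2 ≤ q * p.2 := Nat.le_mul_of_pos_left _ hq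
    refine ⟨⟨⟨hmul', hM, by omega, Nat.not_even_iff_odd.mp hodd' |>.add_even heven'⟩,
      hw (by dsimp only [pairIndex]; omega) hwp⟩, hodd'⟩
  · intro p hp p' hp' h
    rw [mem_coe, mem_filter, mem_filter, mem_oppParityPairs] at hp hp'
    have h2 : p.2 = p'.2 := Nat.eq_of_mul_eq_mul_left hq (congrArg Prod.snd h)
    have h1 : p.1 = p'.1 := Nat.eq_of_mul_eq_mul_right (show 0 < p.2 by omega)
      (by rw [hp.1.1.1, h2, hp'.1.1.1])
    exact Prod.ext h1 h2

theorem sum_neg_one_pow_nonneg (M : ℕ) (w : ℕ → Prop) [DecidablePred w] (hw : Monotone w) :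
    0 ≤ ∑ p ∈ (oppParityPairs M).filter (fun p => w (pairIndex p)), (-1 : ℤ) ^ (p.1 + 1) := by
  have hsign : ∀ a : ℕ, (-1 : ℤ) ^ (a + 1) = if Even a then -1 else 1 := fun a => by
    split_ifs with h
    · exact h.add_one.neg_one_pow
    · exact (Nat.not_even_iff_odd.mp h).add_one.neg_one_pow
  simp only [hsign, sum_ite, sum_const, smul_neg, nsmul_eq_mul, mul_one]
  have := card_filter_even_le_card_filter_odd M w hw
  omega

theorem coeff_Ppoly_nonneg (n j : ℕ) : 0 ≤ (Ppoly n).coeff j := by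
  have hw : Monotone fun i => j ∈ Ico (n - i) (n + i - 1) := fun i i' hii' hi => by
    simp only [mem_Ico] at hi ⊢
    omega
  rw [coeff_Ppoly, sum_ite_signedFactorCount]
  exact sum_neg_one_pow_nonneg _ _ hw

theorem coeff_Ppoly_eq_zero_of_lt {n j : ℕ} (hj : 2 * n - 2 < j) : (Ppoly n).coeff j = 0 := by
  refine (coeff_Ppoly n j).trans (sum_eq_zero fun i hi => if_neg ?_)
  simp only [mem_Icc, mem_Ico] at hi ⊢
  omega

theorem coeff_Ppoly_two_mul_sub_two {n : ℕ} (hn : 1 ≤ n) : (Ppoly n).coeff (2 * n - 2) = 1 := by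
  rw [coeff_Ppoly, sum_eq_single n, if_pos (by simp only [mem_Ico]; omega),
    signedFactorCount_self hn]
  · intro i hi hin
    simp only [mem_Icc] at hi
    exact if_neg (by simp only [mem_Ico]; omega)
  · simp only [mem_Icc]
    omega

theorem Cpoly_eq_sq_mul_monic_nonneg (n : ℕ) (hn : 1 ≤ n) :
    ∃ P : Polynomial ℤ, Cpoly n = (Polynomial.X - 1) ^ 2 * P ∧ P.Monic ∧
      P.natDegree = 2 * n - 2 ∧ ∀ j, 0 ≤ P.coeff j := by
  have hdeg : (Ppoly n).natDegree ≤ 2 * n - 2 :=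
    natDegree_le_iff_coeff_eq_zero.mpr fun _ => coeff_Ppoly_eq_zero_of_lt
  have htop := coeff_Ppoly_two_mul_sub_two hn
  exact ⟨Ppoly n, Cpoly_eq_sq_mul_Ppoly n, monic_of_natDegree_le_of_coeff_eq_one _ hdeg htop,
    natDegree_eq_of_le_of_coeff_ne_zero hdeg (htop ▸ one_ne_zero), coeff_Ppoly_nonneg n⟩
end

section
/- For every integer n ≥ 1, the polynomial C_n(X) ∈ ℤ[X] equals (X−1)² · Σ_{j=0}^{2n−2} a_{n,|j−(n−1)|} · X^j, where for i ≥ 0, a_{n,i} is the number of divisors d of n satisfying (i + √(2n+i²))/2 < d ≤ i + √(2n+i²). In particular, the coefficient of X^{j} in the quotient C_n(X)/(X−1)² is the divisor count a_{n,|j−(n−1)|}, and a_{n,n−1} = a_{n,n−2} = 1 for all n ≥ 2. -/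
open scoped Classical in
/-- `a_{n,i}` is the number of divisors `d` of `n` with
`(i + √(2n+i²))/2 < d ≤ i + √(2n+i²)`. -/
noncomputable def aCoeff (n i : ℕ) : ℕ :=
  (n.divisors.filter fun d =>
    ((i : ℝ) + Real.sqrt (2 * n + i ^ 2)) / 2 < (d : ℝ) ∧
      (d : ℝ) ≤ (i : ℝ) + Real.sqrt (2 * n + i ^ 2)).card

/-! Write `n = a * b`. Completing the square turns the two real bounds in `aCoeff n i` into
`2i < 2a - b` and `a - 2b ≤ 2i`, so `a_{n,i+1} - a_{n,i}` counts the factorizations with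
`a - 2b ∈ {2i+1, 2i+2}` minus those with `2a - b ∈ {2i+1, 2i+2}`. The even values cancel
under `(a, b) ↦ (a / 2, 2b)`. For odd `m`, the solutions `k` of `2n = k(k+m)` are `k = 2b` with
`a - 2b = m` and `k = b` with `2a - b = m`, and `(-1)^k` tells the two kinds apart; so the sums
defining `c_{n,i}` are differences of these counts, and `c_{n,|k|}` is the second difference of
`k ↦ a_{n,|k|}`. As `a_{n,i} = 0` for `i ≥ n`, this is the coefficientwise form of the identity. -/

open Finset Polynomial

namespace Real

theorem half_add_sqrt_lt_iff {c i d : ℝ} (hc : 0 ≤ c) (hd : 0 ≤ d) :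
    (i + √(c + i ^ 2)) / 2 < d ↔ c < 4 * d * (d - i) := by
  have hs := sq_sqrt (show 0 ≤ c + i ^ 2 by positivity)
  have hs0 := sqrt_nonneg (c + i ^ 2)
  constructor
  · intro h
    nlinarith
  · intro h
    have : 0 < 2 * d - i := by nlinarith
    nlinarith [sq_nonneg (√(c + i ^ 2) - (2 * d - i))]

theorem le_add_sqrt_iff {c i d : ℝ} (hc : 0 ≤ c) (hd : 0 ≤ d) :
    d ≤ i + √(c + i ^ 2) ↔ d * (d - 2 * i) ≤ c := by
  have hs := sq_sqrt (show 0 ≤ c + i ^ 2 by positivity)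
  have hs0 := sqrt_nonneg (c + i ^ 2)
  constructor
  · intro h
    rcases le_or_gt d i with hdi | hdi <;> nlinarith
  · intro h
    nlinarith [sq_nonneg (√(c + i ^ 2) - (d - i))]

end Real

theorem aCoeff_eq_card (n i : ℕ) :
    aCoeff n i = #{p ∈ n.divisorsAntidiagonal |
      2 * (i : ℤ) < 2 * p.1 - p.2 ∧ (p.1 : ℤ) - 2 * p.2 ≤ 2 * i} := by
  classical
  -- the filter in `aCoeff` runs over the image of `n.divisors` in `ℝ`
  have hcast : (do let a ← n.divisors; pure (a : ℝ) : Finset ℝ) =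
      n.divisors.map Nat.castEmbedding := by
    ext; simp
  rw [aCoeff, hcast, filter_map, card_map, ← Nat.map_div_right_divisors, filter_map, card_map]
  congr 1
  refine filter_congr fun d hd => ?_
  show _ ↔ 2 * (i : ℤ) < 2 * d - ↑(n / d) ∧ (d : ℤ) - 2 * ↑(n / d) ≤ 2 * i
  rw [Function.comp_apply, Nat.castEmbedding_apply]
  obtain ⟨hdvd, hn⟩ := Nat.mem_divisors.mp hd
  have hd0 : (0 : ℝ) < d := by exact_mod_cast Nat.pos_of_dvd_of_pos hdvd (Nat.pos_of_ne_zero hn)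
  have hde : (n : ℝ) = d * ↑(n / d) := by exact_mod_cast (Nat.mul_div_cancel' hdvd).symm
  have hc : (0 : ℝ) ≤ 2 * n := by positivity
  rw [Real.half_add_sqrt_lt_iff hc hd0.le, Real.le_add_sqrt_iff hc hd0.le, hde]
  generalize n / d = e
  have hlt : 2 * (d * e : ℝ) < 4 * d * (d - i) ↔ (2 * i : ℝ) < 2 * d - e := by
    constructor <;> intro h <;> nlinarith
  have hle : (d : ℝ) * (d - 2 * i) ≤ 2 * (d * e) ↔ (d : ℝ) - 2 * e ≤ 2 * i := by
    constructor <;> intro h <;> nlinarith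
  rw [hlt, hle]
  norm_cast

def signedCount (n : ℕ) (m : ℤ) : ℤ :=
  #{p ∈ n.divisorsAntidiagonal | (p.1 : ℤ) - 2 * p.2 = m} -
    #{p ∈ n.divisorsAntidiagonal | 2 * (p.1 : ℤ) - p.2 = m}

theorem signedCount_two_mul (n : ℕ) (s : ℤ) : signedCount n (2 * s) = 0 := by
  rw [signedCount, sub_eq_zero, Nat.cast_inj]
  refine card_nbij' (fun p => (p.1 / 2, 2 * p.2)) (fun p => (2 * p.1, p.2 / 2)) ?_ ?_ ?_ ?_
  · rintro ⟨a, b⟩ h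
    simp only [mem_coe, mem_filter, Nat.mem_divisorsAntidiagonal] at h ⊢
    obtain ⟨⟨rfl, hn⟩, h⟩ := h
    obtain ⟨c, rfl⟩ : 2 ∣ a := by omega
    exact ⟨⟨by rw [Nat.mul_div_cancel_left c two_pos]; ring, hn⟩, by omega⟩
  · rintro ⟨a, b⟩ h
    simp only [mem_coe, mem_filter, Nat.mem_divisorsAntidiagonal] at h ⊢
    obtain ⟨⟨rfl, hn⟩, h⟩ := h
    obtain ⟨c, rfl⟩ : 2 ∣ b := by omega
    exact ⟨⟨by rw [Nat.mul_div_cancel_left c two_pos]; ring, hn⟩, by omega⟩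
  all_goals
    rintro ⟨a, b⟩ h
    simp only [mem_coe, mem_filter] at h
    simp only [Prod.mk.injEq]
    omega

theorem aCoeff_succ_sub_aCoeff (n i : ℕ) :
    (aCoeff n (i + 1) : ℤ) - aCoeff n i = signedCount n (2 * i + 1) := by
  have hstep : (aCoeff n (i + 1) : ℤ) - aCoeff n i =
      signedCount n (2 * i + 1) + signedCount n (2 * (i + 1)) := by
    rw [aCoeff_eq_card, aCoeff_eq_card]
    simp only [signedCount, natCast_card_filter, ← sum_sub_distrib, ← sum_add_distrib]
    refine sum_congr rfl fun p _ => ?_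
    split_ifs <;> omega
  rw [hstep, signedCount_two_mul, add_zero]

theorem card_even_solutions_eq (n m : ℕ) :
    #{k ∈ Icc 1 (2 * n) | 2 * n = k * (k + m) ∧ Even k} =
      #{p ∈ n.divisorsAntidiagonal | (p.1 : ℤ) - 2 * p.2 = m} := by
  refine card_nbij' (fun k => (k + m, k / 2)) (fun p => 2 * p.2) ?_ ?_ ?_ ?_
  · intro k h
    simp only [mem_coe, mem_filter, mem_Icc, Nat.mem_divisorsAntidiagonal] at h ⊢
    obtain ⟨⟨hk1, -⟩, hk, c, rfl⟩ := h
    have hn : n = (c + c + m) * c := by linarith [hk]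
    refine ⟨⟨by rw [hn]; congr 1; omega, ?_⟩, by push_cast; omega⟩
    rw [hn]; exact mul_ne_zero (by omega) (by omega)
  · rintro ⟨a, b⟩ h
    simp only [mem_coe, mem_filter, mem_Icc, Nat.mem_divisorsAntidiagonal] at h ⊢
    obtain ⟨⟨rfl, hn⟩, h⟩ := h
    obtain ⟨rfl⟩ : a = 2 * b + m := by omega
    have hb : 0 < b := Nat.pos_of_ne_zero (right_ne_zero_of_mul hn)
    refine ⟨⟨by omega, by nlinarith⟩, by ring, even_two_mul b⟩
  · intro k h
    simp only [mem_coe, mem_filter] at h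
    exact Nat.two_mul_div_two_of_even h.2.2
  · rintro ⟨a, b⟩ h
    simp only [mem_coe, mem_filter] at h
    simp only [Prod.mk.injEq]
    omega

theorem card_odd_solutions_eq (n : ℕ) {m : ℕ} (hm : Odd m) :
    #{k ∈ Icc 1 (2 * n) | 2 * n = k * (k + m) ∧ Odd k} =
      #{p ∈ n.divisorsAntidiagonal | 2 * (p.1 : ℤ) - p.2 = m} := by
  refine card_nbij' (fun k => ((k + m) / 2, k)) (fun p => p.2) ?_ ?_ ?_ ?_
  · intro k h
    simp only [mem_coe, mem_filter, mem_Icc, Nat.mem_divisorsAntidiagonal] at h ⊢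
    obtain ⟨⟨hk1, -⟩, hk, hodd⟩ := h
    obtain ⟨c, hc⟩ : Even (k + m) := hodd.add_odd hm
    rw [hc] at hk
    have hn : n = c * k := by linarith
    refine ⟨⟨by rw [hn]; congr 1; omega, ?_⟩, by push_cast; omega⟩
    rw [hn]; exact mul_ne_zero (by omega) (by omega)
  · rintro ⟨a, b⟩ h
    simp only [mem_coe, mem_filter, mem_Icc, Nat.mem_divisorsAntidiagonal] at h ⊢
    obtain ⟨⟨rfl, hn⟩, h⟩ := h
    obtain ⟨hab, hb⟩ : b + m = 2 * a ∧ Odd b := by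
      obtain ⟨r, rfl⟩ := hm
      exact ⟨by omega, ⟨a - r - 1, by omega⟩⟩
    have ha : 0 < a := Nat.pos_of_ne_zero (left_ne_zero_of_mul hn)
    have hb0 : 0 < b := Nat.pos_of_ne_zero (right_ne_zero_of_mul hn)
    refine ⟨⟨by omega, by nlinarith⟩, by rw [hab]; ring, hb⟩
  · intro k _
    rfl
  · rintro ⟨a, b⟩ h
    simp only [mem_coe, mem_filter] at h
    simp only [Prod.mk.injEq, and_true]
    omega

theorem sum_neg_one_pow_eq_signedCount (n : ℕ) {m : ℕ} (hm : Odd m) :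
    ∑ k ∈ Icc 1 (2 * n), (if 2 * n = k * (k + m) then (-1 : ℤ) ^ k else 0) =
      signedCount n m := by
  rw [signedCount, ← card_even_solutions_eq, ← card_odd_solutions_eq n hm,
    natCast_card_filter, natCast_card_filter, ← sum_sub_distrib]
  refine sum_congr rfl fun k _ => ?_
  rcases Nat.even_or_odd k with hk | hk
  · simp [hk, hk.neg_one_pow, Nat.not_odd_iff_even.mpr hk]
  · simp only [hk, hk.neg_one_pow, Nat.not_even_iff_odd.mpr hk, and_true, and_false, if_false]
    split_ifs <;> simp

theorem cCoeff_zero_eq (n : ℕ) : cCoeff n 0 = 2 * ((aCoeff n 1 : ℤ) - aCoeff n 0) := by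
  have h := sum_neg_one_pow_eq_signedCount n odd_one
  rw [aCoeff_succ_sub_aCoeff, cCoeff, if_pos rfl]
  simp only [Nat.cast_zero, Nat.cast_one, mul_zero, zero_add] at h ⊢
  rw [← h, mul_sum]
  refine sum_congr rfl fun k _ => ?_
  split_ifs <;> ring

theorem cCoeff_succ_eq (n i : ℕ) :
    cCoeff n (i + 1) = (aCoeff n i : ℤ) - 2 * aCoeff n (i + 1) + aCoeff n (i + 2) := by
  have h₁ := aCoeff_succ_sub_aCoeff n i
  have h₂ := aCoeff_succ_sub_aCoeff n (i + 1)
  have e₁ := sum_neg_one_pow_eq_signedCount n (odd_two_mul_add_one i)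
  have e₂ := sum_neg_one_pow_eq_signedCount n (odd_two_mul_add_one (i + 1))
  have h₃ : ∑ k ∈ Icc 1 (2 * n),
      (if 2 * n = k * (k + 2 * (i + 1) - 1) then (-1 : ℤ) ^ (k - 1) else 0) =
      -∑ k ∈ Icc 1 (2 * n), (if 2 * n = k * (k + (2 * i + 1)) then (-1 : ℤ) ^ k else 0) := by
    rw [← sum_neg_distrib]
    refine sum_congr rfl fun k hk => ?_
    obtain ⟨j, rfl⟩ : ∃ j, k = j + 1 := ⟨k - 1, by simp at hk; omega⟩
    rw [show j + 1 + 2 * (i + 1) - 1 = j + 1 + (2 * i + 1) by omega, Nat.add_sub_cancel]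
    split_ifs <;> ring
  rw [cCoeff, if_neg i.succ_ne_zero, sum_add_distrib, h₃]
  simp only [add_assoc] at e₂ ⊢
  push_cast at h₁ h₂ e₁ e₂
  linarith

theorem aCoeff_eq_zero_of_le {n i : ℕ} (h : n ≤ i) : aCoeff n i = 0 := by
  rw [aCoeff_eq_card, card_eq_zero, filter_eq_empty_iff]
  rintro ⟨a, b⟩ hp ⟨hlt, -⟩
  obtain ⟨hab, hn⟩ := Nat.mem_divisorsAntidiagonal.mp hp
  dsimp only at hab hlt
  subst hab
  have hb : 0 < b := Nat.pos_of_ne_zero (right_ne_zero_of_mul hn)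
  have : a ≤ a * b := Nat.le_mul_of_pos_right a hb
  omega

theorem aCoeff_eq_one {n i : ℕ} (h₁ : n ≤ i + 2) (h₂ : i < n) : aCoeff n i = 1 := by
  rw [aCoeff_eq_card, card_eq_one]
  refine ⟨(n, 1), ext fun ⟨a, b⟩ => ?_⟩
  simp only [mem_filter, Nat.mem_divisorsAntidiagonal, mem_singleton, Prod.mk.injEq]
  constructor
  · rintro ⟨⟨rfl, hn⟩, hlt, -⟩
    have hb : 0 < b := Nat.pos_of_ne_zero (right_ne_zero_of_mul hn)
    obtain rfl : b = 1 := by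
      by_contra hb1
      have : a * 2 ≤ a * b := Nat.mul_le_mul_left a (by omega)
      omega
    simp
  · rintro ⟨rfl, rfl⟩
    exact ⟨⟨mul_one _, by omega⟩, by push_cast; omega, by push_cast; omega⟩

theorem cCoeff_natAbs_eq (n : ℕ) (k : ℤ) :
    cCoeff n k.natAbs =
      (aCoeff n (k - 1).natAbs : ℤ) - 2 * aCoeff n k.natAbs + aCoeff n (k + 1).natAbs := by
  rcases lt_trichotomy k 0 with hk | rfl | hk
  · obtain ⟨i, rfl⟩ : ∃ i : ℕ, k = -(i + 1) := ⟨(-k - 1).toNat, by omega⟩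
    rw [show (-((i : ℤ) + 1)).natAbs = i + 1 by omega,
      show (-((i : ℤ) + 1) - 1).natAbs = i + 2 by omega,
      show (-((i : ℤ) + 1) + 1).natAbs = i by omega, cCoeff_succ_eq]
    ring
  · simp only [Int.natAbs_zero, zero_sub, zero_add, Int.natAbs_neg, Int.natAbs_one,
      cCoeff_zero_eq]
    ring
  · obtain ⟨i, rfl⟩ : ∃ i : ℕ, k = i + 1 := ⟨(k - 1).toNat, by omega⟩
    rw [show ((i : ℤ) + 1).natAbs = i + 1 by omega, show ((i : ℤ) + 1 - 1).natAbs = i by omega,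
      show ((i : ℤ) + 1 + 1).natAbs = i + 2 by omega, cCoeff_succ_eq]

theorem cCoeff_eq_zero_of_lt {n i : ℕ} (h : n < i) : cCoeff n i = 0 := by
  obtain ⟨j, rfl⟩ : ∃ j, i = j + 1 := ⟨i - 1, by omega⟩
  rw [cCoeff_succ_eq, aCoeff_eq_zero_of_le (by omega), aCoeff_eq_zero_of_le (by omega),
    aCoeff_eq_zero_of_le (by omega)]
  simp

theorem coeff_X_sub_one_mul {R : Type*} [Ring R] {p : R[X]} {q : ℤ → R}
    (hq : ∀ k < 0, q k = 0) (hp : ∀ j : ℕ, p.coeff j = q j) (m : ℕ) :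
    ((X - 1) * p).coeff m = q (m - 1) - q m := by
  rw [sub_mul, one_mul, coeff_sub, hp]
  cases m with
  | zero => simp [hq]
  | succ j => rw [coeff_X_mul, hp]; push_cast; rw [add_sub_cancel_right]

theorem coeff_X_sub_one_sq_mul {R : Type*} [Ring R] {p : R[X]} {q : ℤ → R}
    (hq : ∀ k < 0, q k = 0) (hp : ∀ j : ℕ, p.coeff j = q j) (m : ℕ) :
    ((X - 1) ^ 2 * p).coeff m = q (m - 2) - 2 * q (m - 1) + q m := by
  rw [sq, mul_assoc, coeff_X_sub_one_mul (q := fun k => q (k - 1) - q k)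
    (fun k hk => by simp [hq k hk, hq (k - 1) (by omega)]) (coeff_X_sub_one_mul hq hp),
    sub_sub (m : ℤ) 1 1, one_add_one_eq_two, two_mul]
  abel

theorem coeff_C_mul_X_pow_add_sum {R : Type*} [Semiring R] (c : ℕ → R) (n m : ℕ) :
    (C (c 0) * X ^ n + ∑ i ∈ Icc 1 n, C (c i) * (X ^ (n + i) + X ^ (n - i))).coeff m =
      if m ≤ 2 * n then c ((m : ℤ) - n).natAbs else 0 := by
  simp only [coeff_add, coeff_C_mul, coeff_X_pow, finsetSum_coeff, mul_add, mul_ite, mul_one,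
    mul_zero, sum_add_distrib]
  rcases lt_trichotomy m n with h | rfl | h
  · have h₁ : ∑ i ∈ Icc 1 n, (if m = n + i then c i else 0) = 0 :=
      sum_eq_zero fun i hi => if_neg (by simp at hi; omega)
    have h₂ : ∑ i ∈ Icc 1 n, (if m = n - i then c i else 0) = c (n - m) :=
      (sum_eq_single_of_mem (n - m) (by simp; omega) fun i hi hne =>
        if_neg (by simp at hi; omega)).trans (if_pos (by omega))
    rw [h₁, h₂, if_neg h.ne, if_pos (by omega), zero_add, zero_add]
    congr 1; omega
  · have h₁ : ∑ i ∈ Icc 1 m, (if m = m + i then c i else 0) = 0 :=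
      sum_eq_zero fun i hi => if_neg (by simp at hi; omega)
    have h₂ : ∑ i ∈ Icc 1 m, (if m = m - i then c i else 0) = 0 :=
      sum_eq_zero fun i hi => if_neg (by simp at hi; omega)
    rw [h₁, h₂, if_pos rfl, if_pos (by omega), add_zero, add_zero, sub_self, Int.natAbs_zero]
  · have h₂ : ∑ i ∈ Icc 1 n, (if m = n - i then c i else 0) = 0 :=
      sum_eq_zero fun i hi => if_neg (by simp at hi; omega)
    rw [h₂, if_neg h.ne', zero_add, add_zero]
    split_ifs with hm
    · refine (sum_eq_single_of_mem (m - n) (by simp; omega) fun i hi hne =>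
        if_neg (by simp at hi; omega)).trans ((if_pos (by omega)).trans ?_)
      congr 1; omega
    · exact sum_eq_zero fun i hi => if_neg (by simp at hi; omega)

theorem Cpoly_eq_sq_mul_divisor_counts_general (n : ℕ) :
    Cpoly n = (Polynomial.X - 1) ^ 2 *
        ∑ j ∈ Finset.range (2 * n - 1),
          Polynomial.C ((aCoeff n ((j : ℤ) - ((n : ℤ) - 1)).natAbs : ℤ)) * Polynomial.X ^ j ∧
      (2 ≤ n → aCoeff n (n - 1) = 1 ∧ aCoeff n (n - 2) = 1) := by
  refine ⟨?_, fun hn =>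
    ⟨aCoeff_eq_one (by omega) (by omega), aCoeff_eq_one (by omega) (by omega)⟩⟩
  set q : ℤ → ℤ := fun k => aCoeff n (k - (n - 1)).natAbs
  have hq : ∀ k < 0, q k = 0 := fun k hk => by
    simp only [q, Nat.cast_eq_zero]
    exact aCoeff_eq_zero_of_le (by omega)
  have hp (j : ℕ) : (∑ l ∈ range (2 * n - 1), C (q l) * X ^ l).coeff j = q j := by
    simp only [finsetSum_coeff, coeff_C_mul_X_pow, sum_ite_eq, mem_range]
    split_ifs with hj
    · rfl
    · rw [eq_comm, Nat.cast_eq_zero]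
      exact aCoeff_eq_zero_of_le (by omega)
  ext m
  have hc : (if m ≤ 2 * n then cCoeff n ((m : ℤ) - n).natAbs else 0) =
      cCoeff n ((m : ℤ) - n).natAbs :=
    ite_eq_left_iff.mpr fun hm => (cCoeff_eq_zero_of_lt (by omega)).symm
  rw [Cpoly, coeff_C_mul_X_pow_add_sum, hc, coeff_X_sub_one_sq_mul hq hp, cCoeff_natAbs_eq]
  simp only [q]
  ring_nf

theorem Cpoly_eq_sq_mul_divisor_counts (n : ℕ) (hn : 1 ≤ n) :
    Cpoly n = (Polynomial.X - 1) ^ 2 *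
        ∑ j ∈ Finset.range (2 * n - 1),
          Polynomial.C ((aCoeff n ((j : ℤ) - ((n : ℤ) - 1)).natAbs : ℤ)) * Polynomial.X ^ j ∧
      (2 ≤ n → aCoeff n (n - 1) = 1 ∧ aCoeff n (n - 2) = 1) :=
  Cpoly_eq_sq_mul_divisor_counts_general n
end

section
/- Let n ≥ 1 be an integer and let P ∈ ℤ[X] be any polynomial with C_n(X) = (X−1)²·P(X). Then P(1) = σ(n), the sum of the (positive) divisors of n. -/
open Polynomial Finset

section Aux

lemma term_cast_aux (n i : ℕ) (h1 : 1 ≤ i) (h2 : i ≤ n) :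
    (((n+i) * (n+i-1) : ℕ) : ℤ) + (((n-i) * (n-i-1) : ℕ) : ℤ)
      = 2 * (i:ℤ)^2 + 2 * ((n * (n-1) : ℕ) : ℤ) := by
  rcases eq_or_lt_of_le h2 with rfl | h
  · simp [Nat.sub_self]
    zify [show 1 ≤ i + i by omega, h1]
    ring
  · zify [show 1 ≤ n + i by omega, h2, show 1 ≤ n - i by omega, show 1 ≤ n by omega]
    ring

lemma eval_one_eq_S_aux (n : ℕ) (P : Polynomial ℤ)
    (hP : Cpoly n = (X - 1) ^ 2 * P) :
    P.eval 1 = ∑ i ∈ Icc 1 n, cCoeff n i * (i:ℤ)^2 := by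
  have h0 : cCoeff n 0 + ∑ i ∈ Icc 1 n, cCoeff n i * 2 = 0 := by
    have : (Cpoly n).eval 1 = 0 := by rw [hP]; simp
    rw [← this]; simp [Cpoly, eval_finset_sum, mul_two]
  have h2 : (derivative (derivative (Cpoly n))).eval 1 = 2 * P.eval 1 := by
    rw [hP]; simp [derivative_mul, derivative_pow]
  have h3 : (derivative (derivative (Cpoly n))).eval 1 =
      cCoeff n 0 * ((n * (n-1) : ℕ) : ℤ) +
        ∑ i ∈ Icc 1 n, cCoeff n i * (((n+i) * (n+i-1) : ℕ) + (((n-i) * (n-i-1) : ℕ) : ℤ)) := by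
    simp [Cpoly, derivative_X_pow, eval_finset_sum]
  rw [h3] at h2
  have h4 : ∀ i ∈ Icc 1 n, cCoeff n i * (((n+i) * (n+i-1) : ℕ) + (((n-i) * (n-i-1) : ℕ) : ℤ))
      = (cCoeff n i * 2) * ((n * (n-1) : ℕ) : ℤ) + 2 * (cCoeff n i * (i:ℤ)^2) := by
    intro i hi
    simp only [mem_Icc] at hi
    rw [term_cast_aux n i hi.1 hi.2]
    ring
  rw [Finset.sum_congr rfl h4, Finset.sum_add_distrib, ← Finset.sum_mul, ← Finset.mul_sum] at h2
  have : (2 : ℤ) * P.eval 1 = 2 * ∑ i ∈ Icc 1 n, cCoeff n i * (i:ℤ)^2 := by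
    rw [← h2]; linear_combination ((n * (n-1) : ℕ) : ℤ) * h0
  exact mul_left_cancel₀ two_ne_zero this

lemma inner1_aux (n k : ℕ) (hk1 : 1 ≤ k) :
    ∑ i ∈ Icc 1 n, (if 2*n = k*(k+2*i+1) then (-1:ℤ)^k else 0) * (i:ℤ)^2
      = if 2*n % k = 0 ∧ k+3 ≤ 2*n/k ∧ (k + 2*n/k) % 2 = 1
        then (-1:ℤ)^k * (((2*n/k - k - 1)/2 : ℕ) : ℤ)^2 else 0 := by
  by_cases hc : 2*n % k = 0 ∧ k+3 ≤ 2*n/k ∧ (k + 2*n/k) % 2 = 1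
  · rw [if_pos hc]
    have he : k * (2*n/k) = 2*n := Nat.mul_div_cancel' (Nat.dvd_of_mod_eq_zero hc.1)
    have hle : 2*n/k ≤ 2*n := Nat.div_le_self _ _
    set e := 2*n/k with hedef
    set i₀ := (e - k - 1)/2 with hi₀
    rw [Finset.sum_eq_single_of_mem i₀ (by rw [mem_Icc]; omega)]
    · rw [show k+2*i₀+1 = e by omega, if_pos he.symm]
    · intro j hj hne
      rw [mem_Icc] at hj
      rw [if_neg, zero_mul]
      intro habs
      have : k * (k+2*j+1) = k * e := by omega
      have hje : k+2*j+1 = e := Nat.eq_of_mul_eq_mul_left (by omega) this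
      omega
  · rw [if_neg hc]
    apply Finset.sum_eq_zero
    intro j hj
    rw [mem_Icc] at hj
    rw [if_neg, zero_mul]
    intro habs
    have hd : k ∣ 2*n := Dvd.intro _ habs.symm
    have he : 2*n/k = k+2*j+1 := by rw [habs, Nat.mul_div_cancel_left _ (by omega)]
    have : 2*n % k = 0 := Nat.mod_eq_zero_of_dvd hd
    omega

lemma inner2_aux (n k : ℕ) (hk1 : 1 ≤ k) :
    ∑ i ∈ Icc 1 n, (if 2*n = k*(k+2*i-1) then (-1:ℤ)^(k-1) else 0) * (i:ℤ)^2
      = if 2*n % k = 0 ∧ k+1 ≤ 2*n/k ∧ (k + 2*n/k) % 2 = 1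
        then (-1:ℤ)^(k-1) * (((2*n/k - k + 1)/2 : ℕ) : ℤ)^2 else 0 := by
  by_cases hc : 2*n % k = 0 ∧ k+1 ≤ 2*n/k ∧ (k + 2*n/k) % 2 = 1
  · rw [if_pos hc]
    have he : k * (2*n/k) = 2*n := Nat.mul_div_cancel' (Nat.dvd_of_mod_eq_zero hc.1)
    have hle : 2*n/k ≤ 2*n := Nat.div_le_self _ _
    set e := 2*n/k with hedef
    set i₀ := (e - k + 1)/2 with hi₀
    rw [Finset.sum_eq_single_of_mem i₀ (by rw [mem_Icc]; omega)]
    · rw [show k+2*i₀-1 = e by omega, if_pos he.symm]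
    · intro j hj hne
      rw [mem_Icc] at hj
      rw [if_neg, zero_mul]
      intro habs
      have : k * (k+2*j-1) = k * e := by omega
      have hje : k+2*j-1 = e := Nat.eq_of_mul_eq_mul_left (by omega) this
      omega
  · rw [if_neg hc]
    apply Finset.sum_eq_zero
    intro j hj
    rw [mem_Icc] at hj
    rw [if_neg, zero_mul]
    intro habs
    have hd : k ∣ 2*n := Dvd.intro _ habs.symm
    have he : 2*n/k = k+2*j-1 := by rw [habs, Nat.mul_div_cancel_left _ (by omega)]
    have : 2*n % k = 0 := Nat.mod_eq_zero_of_dvd hd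
    omega

lemma combine_aux (n k : ℕ) (hk1 : 1 ≤ k) :
    (if 2*n % k = 0 ∧ k+3 ≤ 2*n/k ∧ (k + 2*n/k) % 2 = 1
        then (-1:ℤ)^k * (((2*n/k - k - 1)/2 : ℕ) : ℤ)^2 else 0)
    + (if 2*n % k = 0 ∧ k+1 ≤ 2*n/k ∧ (k + 2*n/k) % 2 = 1
        then (-1:ℤ)^(k-1) * (((2*n/k - k + 1)/2 : ℕ) : ℤ)^2 else 0)
    = if 2*n % k = 0 ∧ k < 2*n/k ∧ (k + 2*n/k) % 2 = 1
        then (-1:ℤ)^(k+1) * ((2*n/k - k : ℕ) : ℤ) else 0 := by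
  have hsgn : (-1:ℤ)^(k-1) = (-1)^(k+1) := by
    rw [show k+1 = (k-1)+2 by omega, pow_add]
    simp
  have hsucc : (-1:ℤ)^(k+1) = (-1)^k * (-1) := by rw [pow_succ]
  set e := 2*n/k with hedef
  by_cases h1 : 2*n % k = 0 ∧ k+3 ≤ e ∧ (k + e) % 2 = 1
  · rw [if_pos h1, if_pos ⟨h1.1, by omega, h1.2.2⟩, if_pos ⟨h1.1, by omega, h1.2.2⟩]
    obtain ⟨a, ha⟩ : ∃ a, e - k - 1 = 2*a := ⟨(e-k-1)/2, by omega⟩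
    rw [show (e-k-1)/2 = a by omega, show (e-k+1)/2 = a+1 by omega, show e-k = 2*a+1 by omega,
      hsgn, hsucc]
    push_cast
    ring
  · by_cases h2 : 2*n % k = 0 ∧ k+1 ≤ e ∧ (k + e) % 2 = 1
    · rw [if_neg h1, if_pos h2, if_pos ⟨h2.1, by omega, h2.2.2⟩]
      have he1 : e = k+1 := by omega
      rw [show (e-k+1)/2 = 1 by omega, show e-k = 1 by omega, hsgn]
      push_cast
      ring
    · rw [if_neg h1, if_neg h2, if_neg (by omega)]
      ring

lemma not_odd_odd_aux (k e n : ℕ) (he : k * e = 2*n) : ¬(k % 2 = 1 ∧ e % 2 = 1) := by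
  rintro ⟨h1, h2⟩
  have : Odd (k*e) := Nat.odd_mul.mpr ⟨Nat.odd_iff.mpr h1, Nat.odd_iff.mpr h2⟩
  rw [he, Nat.odd_iff] at this
  omega

lemma F_split_aux (n k : ℕ) (hk : k ∈ (2*n).divisors) :
    (if 2*n % k = 0 ∧ k < 2*n/k ∧ (k + 2*n/k) % 2 = 1
        then (-1:ℤ)^(k+1) * ((2*n/k - k : ℕ) : ℤ) else 0)
    = (if k % 2 = 1 ∧ k < 2*n/k then ((2*n/k : ℕ):ℤ) - k else 0)
      + (if k % 2 = 0 ∧ (2*n/k) % 2 = 1 ∧ k < 2*n/k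
          then (k:ℤ) - ((2*n/k : ℕ) : ℤ) else 0) := by
  rw [Nat.mem_divisors] at hk
  have hd := hk.1
  have hk1 : 1 ≤ k := Nat.pos_of_mem_divisors (Nat.mem_divisors.mpr hk)
  have he : k * (2*n/k) = 2*n := Nat.mul_div_cancel' hd
  have hmod : 2*n % k = 0 := Nat.mod_eq_zero_of_dvd hd
  set e := 2*n/k with hedef
  have hpar := not_odd_odd_aux k e n he
  rcases Nat.mod_two_eq_zero_or_one k with hk2 | hk2
  · rw [if_neg (show ¬(k % 2 = 1 ∧ k < e) by omega), zero_add]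
    by_cases hc : e % 2 = 1 ∧ k < e
    · rw [if_pos (show 2*n % k = 0 ∧ k < e ∧ (k+e) % 2 = 1 by omega),
        if_pos (show k % 2 = 0 ∧ e % 2 = 1 ∧ k < e from ⟨hk2, hc.1, hc.2⟩)]
      have h1 : (-1:ℤ)^(k+1) = -1 := Odd.neg_one_pow (by rw [Nat.odd_iff]; omega)
      rw [h1]
      push_cast [Nat.cast_sub (le_of_lt hc.2)]
      ring
    · rw [if_neg (show ¬(2*n % k = 0 ∧ k < e ∧ (k+e) % 2 = 1) by omega),
        if_neg (show ¬(k % 2 = 0 ∧ e % 2 = 1 ∧ k < e) by omega)]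
  · have he2 : e % 2 = 0 := by omega
    rw [if_neg (show ¬(k % 2 = 0 ∧ e % 2 = 1 ∧ k < e) by omega), add_zero]
    by_cases hc : k < e
    · rw [if_pos (show 2*n % k = 0 ∧ k < e ∧ (k+e) % 2 = 1 by omega),
        if_pos (show k % 2 = 1 ∧ k < e from ⟨hk2, hc⟩)]
      have h1 : (-1:ℤ)^(k+1) = 1 := Even.neg_one_pow (by rw [Nat.even_iff]; omega)
      rw [h1]
      push_cast [Nat.cast_sub (le_of_lt hc)]
      ring
    · rw [if_neg (show ¬(2*n % k = 0 ∧ k < e ∧ (k+e) % 2 = 1) by omega),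
        if_neg (show ¬(k % 2 = 1 ∧ k < e) by omega)]

lemma pair_aux (n d : ℕ) (hd : d ∈ (2*n).divisors) :
    (if d % 2 = 1 ∧ d < 2*n/d then ((2*n/d : ℕ):ℤ) - d else 0)
      + (if (2*n/d) % 2 = 0 ∧ (2*n/(2*n/d)) % 2 = 1 ∧ (2*n/d) < 2*n/(2*n/d)
          then ((2*n/d : ℕ):ℤ) - ((2*n/(2*n/d) : ℕ):ℤ) else 0)
    = if d % 2 = 1 then ((2*n/d : ℕ):ℤ) - d else 0 := by
  rw [Nat.mem_divisors] at hd
  have hdvd := hd.1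
  have hd1 : 1 ≤ d := Nat.pos_of_dvd_of_pos hdvd (by omega)
  have he : d * (2*n/d) = 2*n := Nat.mul_div_cancel' hdvd
  have hdd : 2*n/(2*n/d) = d := Nat.div_div_self hdvd hd.2
  rw [hdd]
  set e := 2*n/d with hedef
  have hpar := not_odd_odd_aux d e n he
  rcases Nat.mod_two_eq_zero_or_one d with hd2 | hd2
  · rw [if_neg (show ¬(d % 2 = 1 ∧ d < e) by omega),
      if_neg (show ¬(e % 2 = 0 ∧ d % 2 = 1 ∧ e < d) by omega),
      if_neg (show ¬(d % 2 = 1) by omega), add_zero]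
  · have he2 : e % 2 = 0 := by omega
    have hne : d ≠ e := by omega
    rw [if_pos hd2]
    rcases lt_or_gt_of_ne hne with h | h
    · rw [if_pos ⟨hd2, h⟩, if_neg (show ¬(e % 2 = 0 ∧ d % 2 = 1 ∧ e < d) by omega), add_zero]
    · rw [if_neg (show ¬(d % 2 = 1 ∧ d < e) by omega),
        if_pos (show e % 2 = 0 ∧ d % 2 = 1 ∧ e < d from ⟨he2, hd2, h⟩), zero_add]

lemma S_to_div_aux (n : ℕ) (hn : 1 ≤ n) :
    ∑ i ∈ Icc 1 n, cCoeff n i * (i:ℤ)^2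
      = ∑ d ∈ (2*n).divisors, (if d % 2 = 1 then ((2*n/d : ℕ):ℤ) - d else 0) := by
  have step1 : ∑ i ∈ Icc 1 n, cCoeff n i * (i:ℤ)^2
      = ∑ k ∈ Icc 1 (2*n), (if 2*n % k = 0 ∧ k < 2*n/k ∧ (k + 2*n/k) % 2 = 1
          then (-1:ℤ)^(k+1) * ((2*n/k - k : ℕ) : ℤ) else 0) := by
    have hre : ∀ i ∈ Icc 1 n, cCoeff n i * (i:ℤ)^2
        = ∑ k ∈ Icc 1 (2*n),
            ((if 2*n = k*(k+2*i+1) then (-1:ℤ)^k else 0) * (i:ℤ)^2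
              + (if 2*n = k*(k+2*i-1) then (-1:ℤ)^(k-1) else 0) * (i:ℤ)^2) := by
      intro i hi
      rw [mem_Icc] at hi
      rw [cCoeff, if_neg (by omega), Finset.sum_mul]
      exact Finset.sum_congr rfl fun k _ => by rw [add_mul]
    rw [Finset.sum_congr rfl hre, Finset.sum_comm]
    refine Finset.sum_congr rfl fun k hk => ?_
    rw [mem_Icc] at hk
    rw [Finset.sum_add_distrib, inner1_aux n k hk.1, inner2_aux n k hk.1, combine_aux n k hk.1]
  rw [step1]
  have step2 : ∑ k ∈ Icc 1 (2*n), (if 2*n % k = 0 ∧ k < 2*n/k ∧ (k + 2*n/k) % 2 = 1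
          then (-1:ℤ)^(k+1) * ((2*n/k - k : ℕ) : ℤ) else 0)
      = ∑ k ∈ (2*n).divisors, (if 2*n % k = 0 ∧ k < 2*n/k ∧ (k + 2*n/k) % 2 = 1
          then (-1:ℤ)^(k+1) * ((2*n/k - k : ℕ) : ℤ) else 0) := by
    symm
    apply Finset.sum_subset
    · intro d hd
      rw [Nat.mem_divisors] at hd
      rw [mem_Icc]
      exact ⟨Nat.pos_of_dvd_of_pos hd.1 (by omega), Nat.le_of_dvd (by omega) hd.1⟩
    · intro x hx hnx
      rw [if_neg]
      intro hcond
      exact hnx (Nat.mem_divisors.mpr ⟨Nat.dvd_of_mod_eq_zero hcond.1, by omega⟩)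
  rw [step2, Finset.sum_congr rfl (fun k hk => F_split_aux n k hk), Finset.sum_add_distrib]
  have hre2 : ∑ k ∈ (2*n).divisors,
        (if k % 2 = 0 ∧ (2*n/k) % 2 = 1 ∧ k < 2*n/k
          then (k:ℤ) - ((2*n/k : ℕ) : ℤ) else 0)
      = ∑ d ∈ (2*n).divisors,
        (if (2*n/d) % 2 = 0 ∧ (2*n/(2*n/d)) % 2 = 1 ∧ (2*n/d) < 2*n/(2*n/d)
          then ((2*n/d : ℕ):ℤ) - ((2*n/(2*n/d) : ℕ):ℤ) else 0) :=
    (Nat.sum_div_divisors (2*n) (fun k =>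
      if k % 2 = 0 ∧ (2*n/k) % 2 = 1 ∧ k < 2*n/k
        then (k:ℤ) - ((2*n/k : ℕ) : ℤ) else 0)).symm
  rw [hre2, ← Finset.sum_add_distrib]
  exact Finset.sum_congr rfl fun d hd => pair_aux n d hd

lemma geom2_aux (a : ℕ) : ∑ i ∈ Finset.range (a+1), 2^i = 2^(a+1) - 1 := by
  induction a with
  | zero => simp
  | succ b ih =>
    rw [Finset.sum_range_succ, ih]
    have : (1:ℕ) ≤ 2^(b+1) := Nat.one_le_two_pow
    ring_nf
    omega

lemma final_sigma_aux (a m : ℕ) (hm2 : ¬ 2 ∣ m) (hm0 : m ≠ 0) :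
    ∑ d ∈ (2*(2^a*m)).divisors, (if d % 2 = 1 then ((2*(2^a*m)/d : ℕ):ℤ) - d else 0)
      = ((∑ d ∈ (2^a*m).divisors, d : ℕ) : ℤ) := by
  have h2n : 2*(2^a*m) = 2^(a+1)*m := by ring
  rw [h2n, ← Finset.sum_filter]
  have hfil : {d ∈ (2^(a+1)*m).divisors | d % 2 = 1} = m.divisors := by
    ext d
    simp only [mem_filter, Nat.mem_divisors]
    constructor
    · rintro ⟨⟨hdvd, -⟩, hodd⟩
      refine ⟨?_, hm0⟩
      have hcop : d.Coprime (2^(a+1)) :=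
        Nat.Coprime.pow_right _ (((Nat.prime_two.coprime_iff_not_dvd).mpr (by omega)).symm)
      exact hcop.dvd_of_dvd_mul_left hdvd
    · rintro ⟨hdvd, -⟩
      refine ⟨⟨hdvd.mul_left _, by positivity⟩, ?_⟩
      rcases Nat.mod_two_eq_zero_or_one d with h | h
      · exact absurd (dvd_trans (Nat.dvd_of_mod_eq_zero h) hdvd) hm2
      · exact h
  rw [hfil]
  have hterm : ∀ d ∈ m.divisors, ((2^(a+1)*m/d : ℕ):ℤ) - (d:ℤ)
      = 2^(a+1) * ((m/d : ℕ):ℤ) - d := by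
    intro d hd
    rw [Nat.mem_divisors] at hd
    rw [Nat.mul_div_assoc _ hd.1]
    push_cast
    ring
  rw [Finset.sum_congr rfl hterm, Finset.sum_sub_distrib, ← Finset.mul_sum]
  have hdiv : ∑ d ∈ m.divisors, ((m/d : ℕ):ℤ) = ∑ d ∈ m.divisors, (d:ℤ) :=
    Nat.sum_div_divisors m _
  rw [hdiv]
  have hsig : (∑ d ∈ (2^a*m).divisors, d) = (2^(a+1)-1) * ∑ d ∈ m.divisors, d := by
    have hcop : Nat.Coprime (2^a) m :=
      Nat.Coprime.pow_left _ ((Nat.prime_two.coprime_iff_not_dvd).mpr hm2)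
    rw [hcop.sum_divisors_mul]
    congr 1
    rw [Nat.sum_divisors_prime_pow Nat.prime_two]
    exact geom2_aux a
  rw [hsig]
  push_cast [Nat.cast_sub (Nat.one_le_two_pow : (1:ℕ) ≤ 2^(a+1))]
  ring

end Aux

theorem quotient_eval_one_eq_sigma (n : ℕ) (hn : 1 ≤ n) (P : Polynomial ℤ)
    (hP : Cpoly n = (Polynomial.X - 1) ^ 2 * P) :
    P.eval 1 = ((∑ d ∈ n.divisors, d : ℕ) : ℤ) := by
  rw [eval_one_eq_S_aux n P hP, S_to_div_aux n hn]
  obtain ⟨a, m, hm2, hnm⟩ : ∃ a m, ¬ 2 ∣ m ∧ n = 2^a * m := by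
    refine ⟨n.factorization 2, n / 2 ^ (n.factorization 2), ?_, ?_⟩
    · exact Nat.not_dvd_ordCompl Nat.prime_two (show n ≠ 0 by omega)
    · exact (Nat.ordProj_mul_ordCompl_eq_self n 2).symm
  have hm0 : m ≠ 0 := by
    intro h
    rw [h, mul_zero] at hnm
    omega
  rw [hnm]
  exact final_sigma_aux a m hm2 hm0
end

section
/- In the power series ring in t over the field ℚ(X) of rational functions, for every integer N ≥ 1, the coefficient of t^N in the finite product Π_{i=1}^{N} (1−t^i)² · (1 − (X + X⁻¹)·t^i + t^{2i})⁻¹ (each factor 1 − (X+X⁻¹)t^i + t^{2i} has constant term 1, hence is invertible) equals C_N(X)/X^N. Equivalently, as formal power series, 1 + Σ_{n≥1} (C_n(X)/X^n)·t^n = Π_{i≥1} (1−t^i)²/(1−(X+X⁻¹)t^i + t^{2i}). -/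
/-!
Write `q = t` and `z = X`, so that the product is `∏_{i ≤ N} (1 - q^i)² / ((1 - z q^i)(1 - q^i/z))`.
For every `M ≥ 1` the rational function `(q;q)_M (q;q)_{2M} / ∏_{j=1}^M (1 - q^j z)(1 - q^j/z)` of
`z` has the partial fraction expansion `∑_{i=1}^M a_i (1/(1 - q^i z) + 1/(1 - q^i/z) - 1)` with
`a_i = (-1)^{i-1} q^{i(i-1)/2} (1 - q^i) ∏_{s=M-i+1}^{M} (1 - q^s) ∏_{s=M+i+1}^{2M} (1 - q^s)`:
cleared of denominators, both sides are polynomials of degree `2M` in `z` which agree at the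
`2M + 1` points `0, q^{±1}, …, q^{±M}`, the points `q^{-k}` reducing to `q^k` by the symmetry
`z ↦ 1/z`. Take `M = 2N`. Modulo `t^{N+1}` the product up to `M` is the product up to `N`, the
factor `∏_{s=M+1}^{2M} (1 - q^s)` is `1`, and `a_i` is `(-1)^{i-1} (q^{i(i-1)/2} - q^{i(i+1)/2})`.
Expanding the geometric series, `t^N` then collects one term `±(X^m + X^{-m})` for every solution
of `N = k(k-1)/2 + km` or `N = k(k+1)/2 + km`, i.e. of `2N = k(k + 2m ∓ 1)`: these are counted by
the `c_{N,m}`.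
-/

open Finset

namespace Crank

def tri : ℕ → ℕ
  | 0 => 0
  | k + 1 => tri k + (k + 1)

theorem two_mul_tri (k : ℕ) : 2 * tri k = k * (k + 1) := by
  induction k with
  | zero => rfl
  | succ k ih => rw [tri]; linarith

theorem le_tri (k : ℕ) : k ≤ tri k := by
  induction k with
  | zero => exact Nat.zero_le _
  | succ k ih => rw [tri]; omega

theorem sum_Ioc_zero_id (k : ℕ) : ∑ j ∈ Ioc 0 k, j = tri k := by
  induction k with
  | zero => rfl
  | succ k ih => rw [sum_Ioc_succ_top k.zero_le, ih, tri]

theorem two_mul_eq_iff_tri (N k : ℕ) : 2 * N = k * (k + 1) ↔ N = tri k := by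
  have := two_mul_tri k
  omega

theorem two_mul_eq_iff_tri_add (N k m : ℕ) :
    2 * N = k * (k + 2 * m + 1) ↔ N = tri k + k * m := by
  have := two_mul_tri k
  constructor <;> intro h <;> nlinarith

theorem two_mul_eq_iff_tri_pred_add (N m : ℕ) {k : ℕ} (hk : 1 ≤ k) :
    2 * N = k * (k + 2 * m - 1) ↔ N = tri (k - 1) + k * m := by
  obtain ⟨j, rfl⟩ : ∃ j, k = j + 1 := ⟨k - 1, by omega⟩
  have := two_mul_tri j
  rw [show j + 1 + 2 * m - 1 = j + 2 * m by omega, Nat.add_sub_cancel]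
  constructor <;> intro h <;> nlinarith

theorem Icc_one_eq_Ioc_zero (n : ℕ) : Icc 1 n = Ioc 0 n :=
  Icc_add_one_left_eq_Ioc 0 n

theorem prod_Ioc_add {M : Type*} [CommMonoid M] (f : ℕ → M) (a b c : ℕ) :
    ∏ j ∈ Ioc a b, f (j + c) = ∏ j ∈ Ioc (a + c) (b + c), f j := by
  rw [← map_add_right_Ioc, prod_map]
  rfl

theorem sum_Icc_comp_pred_add {M : Type*} [AddCommMonoid M] (f : ℕ → M) (n : ℕ) :
    ∑ k ∈ Icc 1 n, f (k - 1) + f n = ∑ k ∈ Icc 1 n, f k + f 0 := by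
  induction n with
  | zero => simp
  | succ n ih => rw [sum_Icc_succ_top (by omega), sum_Icc_succ_top (by omega), Nat.add_sub_cancel,
      ih, add_right_comm]

section CommRing

variable {R : Type*} [CommRing R]

def qProd (q : R) (a b : ℕ) : R := ∏ s ∈ Ioc a b, (1 - q ^ s)

theorem qProd_mul_qProd (q : R) {a b c : ℕ} (hab : a ≤ b) (hbc : b ≤ c) :
    qProd q a b * qProd q b c = qProd q a c :=
  prod_Ioc_consecutive _ hab hbc

theorem qProd_succ (q : R) (a : ℕ) : qProd q a (a + 1) = 1 - q ^ (a + 1) := by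
  simp [qProd]

theorem map_qProd {S : Type*} [CommRing S] (f : R →+* S) (q : R) (a b : ℕ) :
    f (qProd q a b) = qProd (f q) a b := by
  simp [qProd]

/-- The coefficient `a_i` of the partial fraction expansion. -/
def crankCoeff (q : R) (M i : ℕ) : R :=
  (-1) ^ (i - 1) * q ^ tri (i - 1) * (1 - q ^ i) * qProd q (M - i) M * qProd q (M + i) (2 * M)

def prodOneSubMul (q z : R) (s : Finset ℕ) : R := ∏ j ∈ s, (1 - q ^ j * z)

def prodSubPow (q z : R) (s : Finset ℕ) : R := ∏ j ∈ s, (z - q ^ j)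

/-- The partial fraction expansion `∑_i a_i (1/(1 - q^i z) + 1/(1 - q^i/z) - 1)`, multiplied by
`∏_{j=1}^M (1 - q^j z)(z - q^j)`. -/
def crankNumerator (q z : R) (M : ℕ) : R :=
  ∑ i ∈ Icc 1 M, crankCoeff q M i *
    (prodOneSubMul q z ((Icc 1 M).erase i) * prodSubPow q z (Icc 1 M) +
      z * prodOneSubMul q z (Icc 1 M) * prodSubPow q z ((Icc 1 M).erase i) -
      prodOneSubMul q z (Icc 1 M) * prodSubPow q z (Icc 1 M))

theorem map_crankCoeff {S : Type*} [CommRing S] (f : R →+* S) (q : R) (M i : ℕ) :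
    f (crankCoeff q M i) = crankCoeff (f q) M i := by
  simp [crankCoeff, map_qProd]

theorem map_crankNumerator {S : Type*} [CommRing S] (f : R →+* S) (q z : R) (M : ℕ) :
    f (crankNumerator q z M) = crankNumerator (f q) (f z) M := by
  simp [crankNumerator, prodOneSubMul, prodSubPow, map_crankCoeff]

theorem crankNumerator_zero (q : R) (M : ℕ) : crankNumerator q 0 M = 0 := by
  simp [crankNumerator, prodOneSubMul]

theorem prodOneSubMul_pow (q : R) (k M : ℕ) :
    prodOneSubMul q (q ^ k) (Icc 1 M) = qProd q k (M + k) := by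
  simp_rw [prodOneSubMul, Icc_one_eq_Ioc_zero, ← pow_add, prod_Ioc_add (fun s => 1 - q ^ s),
    zero_add, qProd]

theorem prod_pow_sub_pow_of_lt (q : R) (a : ℕ) :
    ∏ j ∈ Ioc 0 a, (q ^ (a + 1) - q ^ j) = (-1) ^ a * q ^ tri a * qProd q 0 a := by
  have h : ∀ j ∈ Ioc 0 a, q ^ (a + 1) - q ^ j = -1 * q ^ j * (1 - q ^ (a + 1 - j)) := by
    intro j hj
    rw [mem_Ioc] at hj
    rw [show a + 1 = j + (a + 1 - j) by omega, pow_add, Nat.add_sub_cancel_left]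
    ring
  have reflect : ∏ j ∈ Ioc 0 a, (1 - q ^ (a + 1 - j)) = qProd q 0 a :=
    prod_nbij' (fun j => a + 1 - j) (fun j => a + 1 - j) (by simp; omega) (by simp; omega)
      (by simp; omega) (by simp; omega) (by simp)
  rw [prod_congr rfl h, prod_mul_distrib, prod_mul_distrib, reflect, prod_const,
    prod_pow_eq_pow_sum, sum_Ioc_zero_id, Nat.card_Ioc, Nat.sub_zero]

theorem prod_pow_sub_pow_of_gt (q : R) (k c : ℕ) :
    ∏ j ∈ Ioc k (c + k), (q ^ k - q ^ j) = (q ^ k) ^ c * qProd q 0 c := by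
  have shift := prod_Ioc_add (fun j => q ^ k - q ^ j) 0 c k
  rw [zero_add] at shift
  rw [← shift, qProd, show (q ^ k) ^ c = ∏ _j ∈ Ioc 0 c, q ^ k by simp, ← prod_mul_distrib]
  refine prod_congr rfl fun j _ => ?_
  ring

theorem prodSubPow_pow_erase (q : R) (a c : ℕ) :
    prodSubPow q (q ^ (a + 1)) ((Icc 1 (c + (a + 1))).erase (a + 1)) =
      (-1) ^ a * q ^ tri a * qProd q 0 a * ((q ^ (a + 1)) ^ c * qProd q 0 c) := by
  have herase : (Icc 1 (c + (a + 1))).erase (a + 1) = Ioc 0 a ∪ Ioc (a + 1) (c + (a + 1)) := by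
    ext j; simp; omega
  have hdisj : Disjoint (Ioc 0 a) (Ioc (a + 1) (c + (a + 1))) := disjoint_left.2 (by simp; omega)
  rw [prodSubPow, herase, prod_union hdisj, prod_pow_sub_pow_of_lt, prod_pow_sub_pow_of_gt]

theorem crankNumerator_pow (q : R) {k M : ℕ} (hk : k ∈ Icc 1 M) :
    crankNumerator q (q ^ k) M = qProd q 0 M * qProd q 0 (2 * M) * (q ^ k) ^ M := by
  have hB : prodSubPow q (q ^ k) (Icc 1 M) = 0 := prod_eq_zero hk (sub_self _)
  have hBerase : ∀ i ∈ Icc 1 M, i ≠ k → prodSubPow q (q ^ k) ((Icc 1 M).erase i) = 0 :=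
    fun i _ hik => prod_eq_zero (mem_erase.2 ⟨hik.symm, hk⟩) (sub_self _)
  rw [crankNumerator, sum_eq_single_of_mem k hk fun i hi hik => by rw [hB, hBerase i hi hik]; ring,
    hB, mul_zero, zero_add, mul_zero, sub_zero]
  obtain ⟨a, rfl⟩ : ∃ a, k = a + 1 := ⟨k - 1, by simp at hk; omega⟩
  obtain ⟨c, rfl⟩ : ∃ c, M = c + (a + 1) := ⟨M - (a + 1), by simp at hk; omega⟩
  have sign : ((-1 : R) ^ a) * (-1) ^ a = 1 := by rw [← mul_pow]; simp
  have power : q ^ tri a * q ^ tri a * q ^ (a + 1) * (q ^ (a + 1)) ^ c =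
      (q ^ (a + 1)) ^ (c + (a + 1)) := by
    rw [← pow_add, ← pow_mul, ← pow_add, ← pow_add, ← pow_mul]
    congr 1
    linarith [two_mul_tri a]
  have glue₁ : qProd q 0 a * (1 - q ^ (a + 1)) * qProd q (a + 1) (c + (a + 1) + (a + 1)) *
      qProd q (c + (a + 1) + (a + 1)) (2 * (c + (a + 1))) = qProd q 0 (2 * (c + (a + 1))) := by
    rw [← qProd_succ, qProd_mul_qProd _ (by omega) (by omega),
      qProd_mul_qProd _ (by omega) (by omega), qProd_mul_qProd _ (by omega) (by omega)]
  have glue₂ : qProd q 0 c * qProd q c (c + (a + 1)) = qProd q 0 (c + (a + 1)) :=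
    qProd_mul_qProd _ (by omega) (by omega)
  rw [prodOneSubMul_pow, prodSubPow_pow_erase, crankCoeff, Nat.add_sub_cancel, Nat.add_sub_cancel,
    ← glue₁, ← glue₂, ← power]
  linear_combination (q ^ tri a * q ^ tri a * q ^ (a + 1) * (q ^ (a + 1)) ^ c) *
    (qProd q 0 a * (1 - q ^ (a + 1)) * qProd q (a + 1) (c + (a + 1) + (a + 1)) *
      qProd q (c + (a + 1) + (a + 1)) (2 * (c + (a + 1)))) *
    (qProd q 0 c * qProd q c (c + (a + 1))) * sign

end CommRing

section Polynomial

open Polynomial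

variable {R : Type*} [CommRing R]

theorem natDegree_prod_le_card {s : Finset ℕ} {f : ℕ → R[X]}
    (h : ∀ j ∈ s, (f j).natDegree ≤ 1) :
    (∏ j ∈ s, f j).natDegree ≤ #s :=
  (natDegree_prod_le s f).trans <| (sum_le_card_nsmul s _ 1 h).trans_eq (by simp)

theorem natDegree_crankNumerator_le (q : R) (M : ℕ) :
    (crankNumerator (C q) X M).natDegree ≤ 2 * M := by
  have hA : ∀ s, (prodOneSubMul (C q) X s).natDegree ≤ #s := fun s =>
    natDegree_prod_le_card fun j _ => by rw [← C_pow]; compute_degree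
  have hB : ∀ s, (prodSubPow (C q) X s).natDegree ≤ #s := fun s =>
    natDegree_prod_le_card fun j _ => by rw [← C_pow]; compute_degree
  refine natDegree_sum_le_of_forall_le _ _ fun i hi => ?_
  have hM : #((Icc 1 M).erase i) + 1 = M := by rw [card_erase_add_one hi, Nat.card_Icc]; omega
  rw [← map_crankCoeff C q M i]
  refine (natDegree_C_mul_le _ _).trans <| (natDegree_sub_le_of_le
    (natDegree_add_le_of_degree_le (n := 2 * M) ?_ ?_)
    (natDegree_mul_le_of_le (hA _) (hB _))).trans ?_
  · exact (natDegree_mul_le_of_le (hA _) (hB _)).trans (by simp; omega)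
  · exact (natDegree_mul_le_of_le (natDegree_mul_le_of_le natDegree_X_le (hA _)) (hB _)).trans
      (by simp; omega)
  · simp; omega

end Polynomial

section Field

variable {F : Type*} [Field F]

theorem crankNumerator_inv (q : F) {z : F} (hz : z ≠ 0) (M : ℕ) :
    crankNumerator q z⁻¹ M * z ^ (2 * M) = crankNumerator q z M := by
  have hA : ∀ s, prodOneSubMul q z⁻¹ s * z ^ #s = prodSubPow q z s := fun s => by
    rw [prodOneSubMul, prod_mul_pow_card]
    exact prod_congr rfl fun j _ => by field_simp
  have hB : ∀ s, prodSubPow q z⁻¹ s * z ^ #s = prodOneSubMul q z s := fun s => by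
    rw [prodSubPow, prod_mul_pow_card]
    exact prod_congr rfl fun j _ => by field_simp
  rw [crankNumerator, crankNumerator, sum_mul]
  refine sum_congr rfl fun i hi => ?_
  obtain ⟨m, hm⟩ : ∃ m, #((Icc 1 M).erase i) = m ∧ M = m + 1 :=
    ⟨_, rfl, by rw [card_erase_of_mem hi, Nat.card_Icc]; simp at hi; omega⟩
  rw [← hA, ← hB, ← hA, ← hB, hm.1, Nat.card_Icc, Nat.add_sub_cancel, hm.2]
  field_simp
  ring

theorem zpow_injective_of_not_isOfFinOrder {q : F} (hq0 : q ≠ 0) (hq : ¬IsOfFinOrder q) :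
    Function.Injective (q ^ · : ℤ → F) := by
  have hu : ¬IsOfFinOrder (Units.mk0 q hq0) := by rwa [← Units.isOfFinOrder_val]
  intro m n h
  exact injective_zpow_iff_not_isOfFinOrder.2 hu (Units.ext (by simpa using h))

open Polynomial in
theorem crankNumerator_eq_of_field {q : F} (hq0 : q ≠ 0) (hq : ¬IsOfFinOrder q) {M : ℕ}
    (hM : 1 ≤ M) (z : F) :
    crankNumerator q z M = qProd q 0 M * qProd q 0 (2 * M) * z ^ M := by
  classical
  set c := qProd q 0 M * qProd q 0 (2 * M)
  have eval_eq : ∀ w : F, (crankNumerator (C q) X M - C c * X ^ M).eval w =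
      crankNumerator q w M - c * w ^ M := fun w => by
    simpa using congrArg (· - c * w ^ M) (map_crankNumerator (evalRingHom w) (C q) X M)
  have hpow : ∀ k ∈ Icc 1 M, crankNumerator q (q ^ k) M = c * (q ^ k) ^ M :=
    fun k hk => crankNumerator_pow q hk
  have hpow_inv : ∀ k ∈ Icc 1 M, crankNumerator q (q ^ k)⁻¹ M = c * ((q ^ k)⁻¹) ^ M := by
    intro k hk
    have hqk : q ^ k ≠ 0 := pow_ne_zero k hq0
    rw [← mul_left_inj' (pow_ne_zero (2 * M) hqk), crankNumerator_inv q hqk, hpow k hk, inv_pow,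
      pow_mul']
    field_simp
  let S : Finset F := insert 0 (((Icc (-M : ℤ) M).erase 0).image (q ^ ·))
  have hS : ∀ w ∈ S, crankNumerator q w M = c * w ^ M := by
    simp only [S, mem_insert, mem_image, mem_erase, mem_Icc]
    rintro w (rfl | ⟨n, ⟨hn0, hn⟩, rfl⟩)
    · rw [crankNumerator_zero, zero_pow (by omega), mul_zero]
    · obtain ⟨k, rfl | rfl⟩ := Int.eq_nat_or_neg n
      · exact_mod_cast hpow k (by simp; omega)
      · simpa using hpow_inv k (by simp; omega)
  have hcard : #S = 2 * M + 1 := by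
    rw [card_insert_of_notMem (by simp [zpow_ne_zero _ hq0]),
      card_image_of_injective _ (zpow_injective_of_not_isOfFinOrder hq0 hq),
      card_erase_of_mem (by simp), Int.card_Icc]
    omega
  have hzero : crankNumerator (C q) X M - C c * X ^ M = 0 := by
    refine eq_zero_of_natDegree_lt_card_of_eval_eq_zero' _ S
      (fun w hw => by rw [eval_eq, hS w hw, sub_self]) ?_
    refine (natDegree_sub_le_of_le (natDegree_crankNumerator_le q M)
      (natDegree_C_mul_X_pow_le c M)).trans_lt ?_
    omega
  simpa [eval_eq, sub_eq_zero] using congrArg (eval z) hzero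

end Field

theorem crankNumerator_eq {R : Type*} [CommRing R] [IsDomain R] {q : R} (hq0 : q ≠ 0)
    (hq : ¬IsOfFinOrder q) {M : ℕ} (hM : 1 ≤ M) (z : R) :
    crankNumerator q z M = qProd q 0 M * qProd q 0 (2 * M) * z ^ M := by
  let f := algebraMap R (FractionRing R)
  have hf : Function.Injective f := IsFractionRing.injective R _
  have hfq : ¬IsOfFinOrder (f q) := fun h =>
    hq ((show Function.Injective (f : R →* FractionRing R) from hf).isOfFinOrder_iff.1 h)
  apply hf
  rw [map_crankNumerator, crankNumerator_eq_of_field ((map_ne_zero_iff _ hf).2 hq0) hfq hM]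
  simp [map_qProd]

section PowerSeries

open PowerSeries

theorem not_isOfFinOrder_X {R : Type*} [CommRing R] [Nontrivial R] :
    ¬IsOfFinOrder (X : R⟦X⟧) := by
  rw [isOfFinOrder_iff_pow_eq_one]
  rintro ⟨n, hn, h⟩
  simpa [hn.ne'] using congrArg constantCoeff h

theorem constantCoeff_one_sub_X_pow_mul_C {R : Type*} [CommRing R] {i : ℕ} (hi : i ≠ 0) (c : R) :
    constantCoeff (1 - X ^ i * C c) = 1 := by
  simp [hi]

variable {K : Type*} [Field K]

theorem prodOneSubMul_X_C_ne_zero (c : K) (M : ℕ) : prodOneSubMul X (C c) (Icc 1 M) ≠ 0 :=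
  prod_ne_zero_iff.2 fun j hj h => one_ne_zero <| by
    rw [← constantCoeff_one_sub_X_pow_mul_C (i := j) (by simp at hj; omega) c, h, map_zero]

theorem mul_inv_one_sub_X_pow_mul_C {i : ℕ} (hi : i ≠ 0) (c : K) :
    (1 - X ^ i * C c) * (1 - X ^ i * C c)⁻¹ = 1 :=
  PowerSeries.mul_inv_cancel _ (by rw [constantCoeff_one_sub_X_pow_mul_C hi]; exact one_ne_zero)

/-- `∑_{m ∈ ℤ} x^m t^{i|m|}`, the expansion of `1/(1 - x t^i) + 1/(1 - x⁻¹ t^i) - 1`. -/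
noncomputable def bilateralGeom (x : K) (i : ℕ) : K⟦X⟧ :=
  (1 - X ^ i * C x)⁻¹ + (1 - X ^ i * C x⁻¹)⁻¹ - 1

noncomputable def crankSeries (x : K) (M : ℕ) : K⟦X⟧ :=
  ∑ i ∈ Icc 1 M, crankCoeff X M i * bilateralGeom x i

noncomputable def crankFactor (x : K) (i : ℕ) : K⟦X⟧ :=
  (1 - X ^ i) ^ 2 * (1 - C (x + x⁻¹) * X ^ i + X ^ (2 * i))⁻¹

theorem prodSubPow_X_C {x : K} (hx : x ≠ 0) (s : Finset ℕ) :
    prodSubPow X (C x) s = C x ^ #s * prodOneSubMul X (C x⁻¹) s := by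
  rw [prodSubPow, prodOneSubMul, ← prod_const, ← prod_mul_distrib]
  refine prod_congr rfl fun j _ => ?_
  rw [mul_sub, mul_one, mul_left_comm, ← map_mul, mul_inv_cancel₀ hx, map_one, mul_one]

theorem prodOneSubMul_erase {s : Finset ℕ} {i : ℕ} (hi : i ∈ s) (hi0 : i ≠ 0) (c : K) :
    prodOneSubMul X (C c) (s.erase i) = prodOneSubMul X (C c) s * (1 - X ^ i * C c)⁻¹ := by
  rw [prodOneSubMul, prodOneSubMul, ← mul_prod_erase s _ hi, mul_right_comm,
    mul_inv_one_sub_X_pow_mul_C hi0, one_mul]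

theorem crankNumerator_X_C {x : K} (hx : x ≠ 0) (M : ℕ) :
    crankNumerator X (C x) M = C x ^ M *
      (prodOneSubMul X (C x) (Icc 1 M) * prodOneSubMul X (C x⁻¹) (Icc 1 M)) * crankSeries x M := by
  rw [crankNumerator, crankSeries, mul_sum]
  refine sum_congr rfl fun i hi => ?_
  have hi0 : i ≠ 0 := by simp at hi; omega
  obtain ⟨m, hm⟩ : ∃ m, #((Icc 1 M).erase i) = m ∧ M = m + 1 :=
    ⟨_, rfl, by rw [card_erase_of_mem hi, Nat.card_Icc]; simp at hi; omega⟩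
  rw [prodSubPow_X_C hx, prodSubPow_X_C hx, prodOneSubMul_erase hi hi0, prodOneSubMul_erase hi hi0,
    hm.1, Nat.card_Icc, Nat.add_sub_cancel, hm.2, bilateralGeom]
  ring

theorem trinomial_eq_mul {x : K} (hx : x ≠ 0) (i : ℕ) :
    (1 - C (x + x⁻¹) * X ^ i + X ^ (2 * i) : K⟦X⟧) = (1 - X ^ i * C x) * (1 - X ^ i * C x⁻¹) := by
  have h : (C x : K⟦X⟧) * C x⁻¹ = 1 := by rw [← map_mul, mul_inv_cancel₀ hx, map_one]
  rw [map_add]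
  linear_combination (-(X : K⟦X⟧) ^ (2 * i)) * h

theorem crankFactor_mul {x : K} (hx : x ≠ 0) {i : ℕ} (hi : i ≠ 0) :
    crankFactor x i * ((1 - X ^ i * C x) * (1 - X ^ i * C x⁻¹)) = (1 - X ^ i) ^ 2 := by
  rw [crankFactor, trinomial_eq_mul hx, mul_assoc, PowerSeries.inv_mul_cancel, mul_one]
  simp [hi]

theorem prod_crankFactor_mul {x : K} (hx : x ≠ 0) (M : ℕ) :
    (∏ i ∈ Icc 1 M, crankFactor x i) *
      (prodOneSubMul X (C x) (Icc 1 M) * prodOneSubMul X (C x⁻¹) (Icc 1 M)) = qProd X 0 M ^ 2 := by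
  rw [qProd, ← Icc_one_eq_Ioc_zero, ← prod_pow, prodOneSubMul, prodOneSubMul, ← prod_mul_distrib,
    ← prod_mul_distrib]
  exact prod_congr rfl fun i hi => crankFactor_mul hx (by simp at hi; omega)

theorem mul_crankSeries {x : K} (hx : x ≠ 0) {M : ℕ} (hM : 1 ≤ M) :
    prodOneSubMul X (C x) (Icc 1 M) * prodOneSubMul X (C x⁻¹) (Icc 1 M) * crankSeries x M =
      qProd X 0 M * qProd X 0 (2 * M) := by
  have h := crankNumerator_eq (X_ne_zero (R := K)) not_isOfFinOrder_X hM (C x)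
  rw [crankNumerator_X_C hx] at h
  refine mul_left_cancel₀ (pow_ne_zero M ((map_ne_zero_iff _ C_injective).2 hx)) ?_
  linear_combination h

theorem prod_crankFactor_mul_qProd {x : K} (hx : x ≠ 0) {M : ℕ} (hM : 1 ≤ M) :
    (∏ i ∈ Icc 1 M, crankFactor x i) * qProd X M (2 * M) = crankSeries x M := by
  refine mul_left_cancel₀ (mul_ne_zero (prodOneSubMul_X_C_ne_zero x M)
    (prodOneSubMul_X_C_ne_zero x⁻¹ M)) ?_
  rw [mul_crankSeries hx hM, ← qProd_mul_qProd X (Nat.zero_le M) (by omega : M ≤ 2 * M)]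
  linear_combination qProd X M (2 * M) * prod_crankFactor_mul hx M

theorem inv_one_sub_X_pow_mul_C {i : ℕ} (hi : i ≠ 0) (c : K) :
    (1 - X ^ i * C c)⁻¹ = expand i hi (rescale c (mk 1)) := by
  symm
  rw [PowerSeries.eq_inv_iff_mul_eq_one (by simp [hi])]
  have h : rescale c (mk 1) * (1 - X * C c) = 1 := by
    rw [mul_comm X, ← rescale_X, ← map_one (rescale c), ← map_sub, ← map_mul,
      mk_one_mul_one_sub_eq_one, map_one]
  simpa [expand_X, expand_C] using congrArg (expand i hi) h

theorem coeff_inv_one_sub_X_pow_mul_C {i : ℕ} (hi : i ≠ 0) (c : K) (n : ℕ) :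
    coeff n (1 - X ^ i * C c)⁻¹ = if i ∣ n then c ^ (n / i) else 0 := by
  rw [inv_one_sub_X_pow_mul_C hi, coeff_expand]
  simp [coeff_rescale]

theorem coeff_bilateralGeom (x : K) {i : ℕ} (hi : i ≠ 0) (n : ℕ) :
    coeff n (bilateralGeom x i) =
      (if i ∣ n then x ^ (n / i) + x⁻¹ ^ (n / i) else 0) - if n = 0 then 1 else 0 := by
  rw [bilateralGeom, map_sub, map_add, coeff_inv_one_sub_X_pow_mul_C hi,
    coeff_inv_one_sub_X_pow_mul_C hi, coeff_one]
  split_ifs <;> simp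

theorem coeff_X_pow_mul_bilateralGeom (x : K) {i : ℕ} (hi : i ≠ 0) (a N : ℕ) :
    coeff N (X ^ a * bilateralGeom x i) = (if N = a then 1 else 0) +
      ∑ m ∈ Icc 1 N, (if N = a + i * m then 1 else 0) * (x ^ m + x⁻¹ ^ m) := by
  rw [coeff_X_pow_mul']
  by_cases ha : a ≤ N
  · obtain ⟨e, rfl⟩ : ∃ e, N = a + e := ⟨N - a, by omega⟩
    simp only [if_pos ha, Nat.add_sub_cancel_left, coeff_bilateralGeom x hi, add_eq_left,
      add_right_inj]
    rcases eq_or_ne e 0 with rfl | he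
    · rw [sum_eq_zero fun m hm => by simp at hm; simp [hi]; omega]
      simp
    by_cases hd : i ∣ e
    · obtain ⟨d, rfl⟩ := hd
      have hd : d ∈ Icc 1 (a + i * d) := by
        simp only [mem_Icc]
        constructor <;> nlinarith [Nat.pos_of_ne_zero hi, Nat.pos_of_ne_zero he]
      simp_rw [mul_right_inj' hi, eq_comm (a := d), ite_mul, one_mul, zero_mul, sum_ite_eq',
        if_pos hd]
      simp [he, hi]
    · rw [sum_eq_zero fun m _ => by rw [if_neg fun h => hd ⟨m, h⟩, zero_mul]]
      simp [hd, he]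
  · rw [if_neg ha, if_neg (by omega), sum_eq_zero fun m _ => by rw [if_neg (by omega), zero_mul]]
    simp

theorem coeff_X_pow_mul_mul_prod_one_sub_X_pow (φ : K⟦X⟧) {a N : ℕ} {S : Finset ℕ}
    (hS : ∀ s ∈ S, N < a + s) :
    coeff N (X ^ a * φ * ∏ s ∈ S, (1 - X ^ s)) = coeff N (X ^ a * φ) := by
  rw [mul_assoc, coeff_X_pow_mul', coeff_X_pow_mul']
  split_ifs
  · refine coeff_mul_prod_one_sub_of_lt_order _ _ _ _ fun s hs => ?_
    rw [order_X_pow]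
    exact_mod_cast (by have := hS s hs; omega)
  · rfl

theorem coeff_crankCoeff_mul (φ : K⟦X⟧) {N M i : ℕ} (hNM : N < M) (hi : i ∈ Icc 1 M) :
    coeff N (crankCoeff X M i * φ) =
      (-1) ^ (i - 1) * (coeff N (X ^ tri (i - 1) * φ) - coeff N (X ^ tri i * φ)) := by
  simp only [mem_Icc] at hi
  have htri : tri (i - 1) + i = tri i := by
    obtain ⟨j, rfl⟩ : ∃ j, i = j + 1 := ⟨i - 1, by omega⟩
    simp [tri]
  have hsplit : crankCoeff X M i * φ = C ((-1) ^ (i - 1)) *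
      (X ^ tri (i - 1) * ((1 - X ^ i) * φ * qProd X (M - i) M) * qProd X (M + i) (2 * M)) := by
    simp only [crankCoeff, map_pow, map_neg, map_one]
    ring
  -- `i - 1 ≤ tri (i - 1)`: the factor `X ^ tri (i - 1)` pushes both windows past degree `M - 1`
  have hlow := le_tri (i - 1)
  rw [hsplit, coeff_C_mul, qProd, qProd, coeff_X_pow_mul_mul_prod_one_sub_X_pow _ fun s hs => by
    simp at hs; omega, ← mul_assoc, coeff_X_pow_mul_mul_prod_one_sub_X_pow _ fun s hs => by
    simp at hs; omega, sub_mul, one_mul, mul_sub, map_sub, ← mul_assoc, ← pow_add, htri]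

theorem one_sub_crankFactor (x : K) {i : ℕ} (hi : i ≠ 0) :
    1 - crankFactor x i =
      X ^ i * (C (2 - (x + x⁻¹)) * (1 - C (x + x⁻¹) * X ^ i + X ^ (2 * i))⁻¹) := by
  have hT := PowerSeries.mul_inv_cancel (1 - C (x + x⁻¹) * X ^ i + X ^ (2 * i) : K⟦X⟧)
    (by simp [hi])
  rw [crankFactor, map_sub, map_ofNat]
  linear_combination (-1 : K⟦X⟧) * hT

theorem coeff_prod_crankFactor_of_le (x : K) {N M : ℕ} (hNM : N ≤ M) :
    coeff N (∏ i ∈ Icc 1 M, crankFactor x i) = coeff N (∏ i ∈ Icc 1 N, crankFactor x i) := by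
  rw [Icc_one_eq_Ioc_zero, Icc_one_eq_Ioc_zero, ← prod_Ioc_consecutive _ (Nat.zero_le N) hNM,
    ← prod_congr (s₁ := Ioc N M) rfl fun i _ => sub_sub_cancel 1 (crankFactor x i)]
  refine coeff_mul_prod_one_sub_of_lt_order _ _ _ _ fun i hi => ?_
  rw [mem_Ioc] at hi
  rw [one_sub_crankFactor x (by omega)]
  calc (N : ℕ∞) < i := by exact_mod_cast hi.1
    _ ≤ order (X ^ i : K⟦X⟧) + order _ := by rw [order_X_pow]; exact le_self_add
    _ ≤ _ := le_order_mul _ _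

theorem coeff_mul_qProd_X (φ : K⟦X⟧) {N a : ℕ} (hN : N ≤ a) (b : ℕ) :
    coeff N (φ * qProd X a b) = coeff N φ :=
  coeff_mul_prod_one_sub_of_lt_order _ _ _ _ fun s hs => by
    rw [order_X_pow]; exact_mod_cast (by simp at hs; omega)

theorem coeff_crankSeries (x : K) {N M : ℕ} (hNM : N < M) :
    coeff N (crankSeries x M) = ∑ i ∈ Icc 1 M, (-1) ^ (i - 1) *
      (coeff N (X ^ tri (i - 1) * bilateralGeom x i) -
        coeff N (X ^ tri i * bilateralGeom x i)) := by
  rw [crankSeries, map_sum]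
  exact sum_congr rfl fun i hi => coeff_crankCoeff_mul _ hNM hi

end PowerSeries

section Coefficients

variable {K : Type*} [Field K]

theorem cast_cCoeff_zero {N : ℕ} (hN : 1 ≤ N) :
    (cCoeff N 0 : K) = ∑ i ∈ Icc 1 (2 * N),
      (-1) ^ (i - 1) * ((if N = tri (i - 1) then 1 else 0) - if N = tri i then 1 else 0) := by
  -- each `k` occurs once as `i - 1` and once as `i`; the boundary terms `k = 0, 2N` vanish
  let φ : ℕ → K := fun k => (-1) ^ k * if N = tri k then 1 else 0
  have hφ : φ 0 = φ (2 * N) := by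
    have := le_tri (2 * N)
    simp only [φ, if_neg (show N ≠ tri 0 by rw [tri]; omega),
      if_neg (show N ≠ tri (2 * N) by omega), mul_zero]
  have hreindex := sum_Icc_comp_pred_add φ (2 * N)
  rw [hφ, add_left_inj] at hreindex
  have hterm : ∀ i ∈ Icc 1 (2 * N), (-1 : K) ^ (i - 1) *
      ((if N = tri (i - 1) then 1 else 0) - if N = tri i then 1 else 0) = φ (i - 1) + φ i := by
    intro i hi
    obtain ⟨j, rfl⟩ : ∃ j, i = j + 1 := ⟨i - 1, by simp at hi; omega⟩
    simp only [φ, Nat.add_sub_cancel, pow_succ]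
    ring
  rw [sum_congr rfl hterm, sum_add_distrib, hreindex, cCoeff, if_pos rfl, Int.cast_sum, ← two_mul,
    mul_sum]
  refine sum_congr rfl fun k _ => ?_
  simp only [φ, two_mul_eq_iff_tri]
  split_ifs <;> simp

theorem cast_cCoeff {N m : ℕ} (hm : m ≠ 0) :
    (cCoeff N m : K) = ∑ i ∈ Icc 1 (2 * N), (-1) ^ (i - 1) *
      ((if N = tri (i - 1) + i * m then 1 else 0) - if N = tri i + i * m then 1 else 0) := by
  rw [cCoeff, if_neg hm, Int.cast_sum]
  refine sum_congr rfl fun i hi => ?_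
  have hi1 : 1 ≤ i := by simp at hi; omega
  have hsign : (-1 : K) ^ i = -(-1) ^ (i - 1) := by
    conv_lhs => rw [← Nat.sub_add_cancel hi1, pow_succ]
    ring
  simp only [two_mul_eq_iff_tri_add, two_mul_eq_iff_tri_pred_add N m hi1]
  split_ifs <;> simp [hsign]

theorem aeval_Cpoly_div [Algebra ℤ K] {x : K} (hx : x ≠ 0) (N : ℕ) :
    Polynomial.aeval x (Cpoly N) / x ^ N =
      (cCoeff N 0 : K) + ∑ m ∈ Icc 1 N, (cCoeff N m : K) * (x ^ m + x⁻¹ ^ m) := by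
  rw [div_eq_iff (pow_ne_zero N hx), add_mul, sum_mul, Cpoly]
  simp only [map_add, map_mul, map_pow, eq_intCast, map_intCast, Polynomial.aeval_X, map_sum]
  congr 1
  refine sum_congr rfl fun m hm => ?_
  rw [pow_add, pow_sub₀ _ hx (by simp at hm; omega), inv_pow]
  ring

open PowerSeries

theorem sum_coeff_eq_cCoeff (x : K) {N : ℕ} (hN : 1 ≤ N) :
    ∑ i ∈ Icc 1 (2 * N), (-1) ^ (i - 1) *
      (coeff N (X ^ tri (i - 1) * bilateralGeom x i) - coeff N (X ^ tri i * bilateralGeom x i)) =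
      (cCoeff N 0 : K) + ∑ m ∈ Icc 1 N, (cCoeff N m : K) * (x ^ m + x⁻¹ ^ m) := by
  have hterm : ∀ i ∈ Icc 1 (2 * N), (-1 : K) ^ (i - 1) *
      (coeff N (X ^ tri (i - 1) * bilateralGeom x i) - coeff N (X ^ tri i * bilateralGeom x i)) =
      (-1) ^ (i - 1) * ((if N = tri (i - 1) then 1 else 0) - if N = tri i then 1 else 0) +
        ∑ m ∈ Icc 1 N, (-1) ^ (i - 1) * ((if N = tri (i - 1) + i * m then 1 else 0) -
          if N = tri i + i * m then 1 else 0) * (x ^ m + x⁻¹ ^ m) := by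
    intro i hi
    have hi0 : i ≠ 0 := by simp at hi; omega
    rw [coeff_X_pow_mul_bilateralGeom x hi0, coeff_X_pow_mul_bilateralGeom x hi0,
      add_sub_add_comm, ← sum_sub_distrib, mul_add, mul_sum]
    congr 1
    exact sum_congr rfl fun m _ => by ring
  rw [sum_congr rfl hterm, sum_add_distrib, sum_comm, cast_cCoeff_zero hN]
  congr 1
  exact sum_congr rfl fun m hm => by rw [cast_cCoeff (by simp at hm; omega), sum_mul]

theorem coeff_prod_crankFactor {x : K} (hx : x ≠ 0) {N : ℕ} (hN : 1 ≤ N) :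
    coeff N (∏ i ∈ Icc 1 N, crankFactor x i) =
      (cCoeff N 0 : K) + ∑ m ∈ Icc 1 N, (cCoeff N m : K) * (x ^ m + x⁻¹ ^ m) := by
  rw [← coeff_prod_crankFactor_of_le x (by omega : N ≤ 2 * N),
    ← coeff_mul_qProd_X _ (by omega : N ≤ 2 * N) (2 * (2 * N)),
    prod_crankFactor_mul_qProd hx (by omega), coeff_crankSeries x (by omega : N < 2 * N),
    sum_coeff_eq_cCoeff x hN]

end Coefficients

end Crank

/-- In the power series ring in `t` over the rational function field `ℚ(X)`, the coefficient of
`t^N` in `∏_{i=1}^{N} (1-t^i)² (1 - (X+X⁻¹) t^i + t^{2i})⁻¹` is `C_N(X)/X^N`. -/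
theorem coeff_prod_eq_Cpoly_div_X_pow (N : ℕ) (hN : 1 ≤ N) :
    PowerSeries.coeff (R := RatFunc ℚ) N
        (∏ i ∈ Finset.Icc 1 N,
          (1 - PowerSeries.X ^ i) ^ 2 *
            (1 - PowerSeries.C (R := RatFunc ℚ) (RatFunc.X + RatFunc.X⁻¹) * PowerSeries.X ^ i +
              PowerSeries.X ^ (2 * i))⁻¹) =
      Polynomial.aeval (RatFunc.X : RatFunc ℚ) (Cpoly N) / RatFunc.X ^ N := by
  rw [Crank.aeval_Cpoly_div RatFunc.X_ne_zero]
  exact Crank.coeff_prod_crankFactor RatFunc.X_ne_zero hN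
end

section
/- Let n ≥ 1 be an integer and q > 1 a real number. For real t such that 1 − q^n t ≠ 0 and 1 − q^{n+i} t ≠ 0 and 1 − q^{n−i} t ≠ 0 for all 1 ≤ i ≤ n, define Z(t) = (1 − q^n t)^{−c_{n,0}} · Π_{i=1}^{n} ((1 − q^{n+i} t)(1 − q^{n−i} t))^{−c_{n,i}} (integer powers of nonzero reals). Then for every real t ≠ 0 such that Z is defined at both t and 1/(q^{2n} t), one has Z(1/(q^{2n} t)) = Z(t). -/
/-!
Put `u = q^n t`. The substitution `t ↦ 1/(q^{2n} t)` is `u ↦ u⁻¹`, and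
`1 - u⁻¹ = -(1 - u)/u`, `(1 - q^i u⁻¹)(1 - q^{-i} u⁻¹) = (1 - q^i u)(1 - q^{-i} u)/u²`.
So `Z(1/(q^{2n} t)) = Z(t) · (-u)^{c_{n,0}} · u^{2 ∑_{i ≥ 1} c_{n,i}}`, and the extra factor is `1`:
with `a_i = ∑_{n = k(k+2i+1)/2} (-1)^k` one has `c_{n,0} = 2 a_0` and `c_{n,i} = a_i - a_{i-1}`,
while `a_n = 0`, so `∑_{i=1}^n c_{n,i} = -a_0`.
-/

open Finset

def cPart (n i : ℕ) : ℤ :=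
  ∑ k ∈ Icc 1 (2 * n), if 2 * n = k * (k + 2 * i + 1) then (-1 : ℤ) ^ k else 0

lemma cCoeff_zero_eq_two_mul (n : ℕ) : cCoeff n 0 = 2 * cPart n 0 := by
  rw [cCoeff, if_pos rfl, cPart, mul_sum]
  refine sum_congr rfl fun k _ => ?_
  simp only [mul_ite, mul_zero, add_zero]

lemma cCoeff_succ_eq_sub (n i : ℕ) : cCoeff n (i + 1) = cPart n (i + 1) - cPart n i := by
  rw [cCoeff, if_neg i.succ_ne_zero, cPart, cPart, ← sum_sub_distrib]
  refine sum_congr rfl fun k hk => ?_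
  obtain ⟨m, rfl⟩ : ∃ m, k = m + 1 := ⟨k - 1, by grind⟩
  have hshift : m + 1 + 2 * (i + 1) - 1 = m + 1 + 2 * i + 1 := by omega
  rw [hshift, Nat.add_sub_cancel, pow_succ]
  split_ifs <;> ring

lemma cPart_self (n : ℕ) : cPart n n = 0 := by
  refine sum_eq_zero fun k hk => if_neg fun h => ?_
  have hk : 1 ≤ k := (mem_Icc.mp hk).1
  nlinarith

lemma sum_cCoeff_Icc (n m : ℕ) : ∑ i ∈ Icc 1 m, cCoeff n i = cPart n m - cPart n 0 := by
  induction m with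
  | zero => simp
  | succ m ih => rw [sum_Icc_succ_top (by omega), ih, cCoeff_succ_eq_sub]; ring

lemma sum_cCoeff (n : ℕ) : ∑ i ∈ Icc 1 n, cCoeff n i = -cPart n 0 := by
  rw [sum_cCoeff_Icc, cPart_self, zero_sub]

lemma zpow_sum₀ {G₀ ι : Type*} [CommGroupWithZero G₀] {a : G₀} (ha : a ≠ 0) (s : Finset ι) (g : ι → ℤ) :
    a ^ (∑ i ∈ s, g i) = ∏ i ∈ s, a ^ g i := by
  classical
  induction s using Finset.cons_induction with
  | empty => simp
  | cons j s hj ih => rw [sum_cons, prod_cons, zpow_add₀ ha, ih]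

section PairedProduct

variable {K ι : Type*} [Field K]

lemma one_sub_mul_inv_mul_one_sub_inv_mul_inv {a u : K} (ha : a ≠ 0) (hu : u ≠ 0) :
    (1 - a * u⁻¹) * (1 - a⁻¹ * u⁻¹) = (1 - a * u) * (1 - a⁻¹ * u) * (u ^ 2)⁻¹ := by
  field_simp
  ring

def pairedProduct (s : Finset ι) (a : ι → K) (d : ℤ) (c : ι → ℤ) (u : K) : K :=
  (1 - u) ^ (-(2 * d)) * ∏ i ∈ s, ((1 - a i * u) * (1 - (a i)⁻¹ * u)) ^ (-c i)

theorem pairedProduct_inv {s : Finset ι} {a : ι → K} (ha : ∀ i ∈ s, a i ≠ 0) {d : ℤ}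
    {c : ι → ℤ} (hc : ∑ i ∈ s, c i = -d) {u : K} (hu : u ≠ 0) :
    pairedProduct s a d c u⁻¹ = pairedProduct s a d c u := by
  have hu2 : u ^ 2 ≠ 0 := pow_ne_zero 2 hu
  have h_single : (1 - u⁻¹) ^ (-(2 * d)) = (1 - u) ^ (-(2 * d)) * (u ^ 2) ^ d := by
    rw [show 1 - u⁻¹ = (1 - u) * -u⁻¹ by field_simp; ring, mul_zpow, ← neg_mul, zpow_mul (-u⁻¹),
      zpow_neg, zpow_ofNat, neg_sq, inv_pow, inv_inv]
  have h_pairs : ∏ i ∈ s, ((1 - a i * u⁻¹) * (1 - (a i)⁻¹ * u⁻¹)) ^ (-c i) =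
      (∏ i ∈ s, ((1 - a i * u) * (1 - (a i)⁻¹ * u)) ^ (-c i)) * (u ^ 2) ^ (-d) := by
    rw [← hc, zpow_sum₀ hu2, ← prod_mul_distrib]
    refine prod_congr rfl fun i hi => ?_
    rw [one_sub_mul_inv_mul_one_sub_inv_mul_inv (ha i hi) hu, mul_zpow, inv_zpow', neg_neg]
  rw [pairedProduct, pairedProduct, h_single, h_pairs, mul_mul_mul_comm, ← zpow_add₀ hu2,
    add_neg_cancel, zpow_zero, mul_one]

end PairedProduct

theorem zeta_functional_equation_general (n : ℕ) (q : ℝ) (hq : 1 < q)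
    (Z : ℝ → ℝ)
    (hZ : ∀ t : ℝ, Z t =
      (1 - q ^ n * t) ^ (-(cCoeff n 0)) *
        ∏ i ∈ Finset.Icc 1 n,
          ((1 - q ^ (n + i) * t) * (1 - q ^ (n - i) * t)) ^ (-(cCoeff n i)))
    (t : ℝ) (ht : t ≠ 0) :
    Z (1 / (q ^ (2 * n) * t)) = Z t := by
  have hq0 : q ≠ 0 := (zero_lt_one.trans hq).ne'
  have hZ_paired : ∀ x, Z x = pairedProduct (Icc 1 n) (q ^ ·) (cPart n 0) (cCoeff n) (q ^ n * x) := by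
    intro x
    rw [hZ, pairedProduct, cCoeff_zero_eq_two_mul]
    congr 1
    refine prod_congr rfl fun i hi => ?_
    rw [pow_add, pow_sub₀ q hq0 (mem_Icc.mp hi).2]
    ring_nf
  have h_inv : q ^ n * (1 / (q ^ (2 * n) * t)) = (q ^ n * t)⁻¹ := by
    field_simp
    ring
  rw [hZ_paired, hZ_paired, h_inv]
  exact pairedProduct_inv (fun i _ => pow_ne_zero i hq0) (sum_cCoeff n)
    (mul_ne_zero (pow_ne_zero n hq0) ht)

/-- The functional equation `Z(1/(q^{2n} t)) = Z(t)` for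
`Z(t) = (1-q^n t)^{-c_{n,0}} ∏_{i=1}^n ((1-q^{n+i}t)(1-q^{n-i}t))^{-c_{n,i}}`. -/
theorem zeta_functional_equation (n : ℕ) (hn : 1 ≤ n) (q : ℝ) (hq : 1 < q)
    (Z : ℝ → ℝ)
    (hZ : ∀ t : ℝ, Z t =
      (1 - q ^ n * t) ^ (-(cCoeff n 0)) *
        ∏ i ∈ Finset.Icc 1 n,
          ((1 - q ^ (n + i) * t) * (1 - q ^ (n - i) * t)) ^ (-(cCoeff n i)))
    (t : ℝ) (ht : t ≠ 0)
    (h1 : 1 - q ^ n * t ≠ 0)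
    (h2 : ∀ i ∈ Finset.Icc 1 n, 1 - q ^ (n + i) * t ≠ 0 ∧ 1 - q ^ (n - i) * t ≠ 0)
    (h1' : 1 - q ^ n * (1 / (q ^ (2 * n) * t)) ≠ 0)
    (h2' : ∀ i ∈ Finset.Icc 1 n,
      1 - q ^ (n + i) * (1 / (q ^ (2 * n) * t)) ≠ 0 ∧
        1 - q ^ (n - i) * (1 / (q ^ (2 * n) * t)) ≠ 0) :
    Z (1 / (q ^ (2 * n) * t)) = Z t :=
  zeta_functional_equation_general n q hq Z hZ t ht
end

section
/- For every integer n ≥ 1, Σ_{λ ⊢ n} (−1)^{n + ℓ(λ)} equals the number of partitions of n into pairwise distinct odd parts, where the sum is over all partitions λ of n and ℓ(λ) denotes the number of parts of λ. Equivalently, the value at q = −1 of the polynomial A_n(q) = Σ_{λ ⊢ n} q^{n+ℓ(λ)} is the number of partitions of n with unequal odd parts. -/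
/-!
Counting each partition with the multiplicative weight `∏ (-1)^(part + 1)` gives
`∑_{λ ⊢ n} (-1)^(n + ℓ(λ))`, so these numbers have generating function
`∏_{k ≥ 1} 1 / (1 + (-q)^k)`, while partitions into distinct odd parts have generating function
`∏_{k odd} (1 + q^k)`. Multiplying the latter by `∏_{k ≥ 1} (1 + (-q)^k)` pairs the odd factors
into `1 - q^(2k)` and leaves the even ones as `1 + q^k`; with `φ = q²` this is Euler's identity
`∏_{k odd} (1 - φ^k) · ∏_{k ≥ 1} (1 + φ^k) = 1`, proved by cancelling the unit
`∏ (1 - φ^k) = ∏_{k odd} (1 - φ^k) · ∏ (1 - φ^(2k))` against `∏ (1 + φ^k) (1 - φ^k)`.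
-/

open Finset PowerSeries PowerSeries.WithPiTopology

section PiTopology

variable {R : Type*} [CommRing R] [TopologicalSpace R]

theorem multipliable_one_add_of_X_pow_dvd {f : ℕ → R⟦X⟧} (h : ∀ m, X ^ (m + 1) ∣ f m) :
    Multipliable fun m ↦ 1 + f m := by
  refine multipliable_one_add_of_tendsto_order_atTop_nhds_top R <|
    ENat.tendsto_nhds_top_iff_natCast_lt.mpr fun n ↦ Filter.eventually_atTop.mpr ⟨n, fun m hm ↦ ?_⟩
  exact (Nat.cast_lt.mpr (Nat.lt_succ_of_le hm)).trans_le
    (nat_le_order _ _ (X_pow_dvd_iff.mp (h m)))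

theorem multipliable_one_add_pow {φ : R⟦X⟧} (hφ : X ∣ φ) {k : ℕ → ℕ} (hk : ∀ m, m < k m) :
    Multipliable fun m ↦ 1 + φ ^ k m :=
  multipliable_one_add_of_X_pow_dvd fun m ↦ (pow_dvd_pow X (hk m)).trans (pow_dvd_pow_of_dvd hφ _)

theorem multipliable_one_sub_pow {φ : R⟦X⟧} (hφ : X ∣ φ) {k : ℕ → ℕ} (hk : ∀ m, m < k m) :
    Multipliable fun m ↦ 1 - φ ^ k m := by
  simpa only [sub_eq_add_neg] using multipliable_one_add_of_X_pow_dvd fun m ↦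
    (dvd_neg).mpr ((pow_dvd_pow X (hk m)).trans (pow_dvd_pow_of_dvd hφ _))

theorem isUnit_tprod_one_sub_of_X_dvd [T2Space R] {f : ℕ → R⟦X⟧}
    (hf : Multipliable fun m ↦ 1 - f m) (h : ∀ m, X ∣ f m) : IsUnit (∏' m, (1 - f m)) := by
  have h₀ := hf.hasProd.map constantCoeff (continuous_constantCoeff R)
  simp only [Function.comp_def, map_sub, map_one, X_dvd_iff.mp (h _), sub_zero] at h₀
  rw [isUnit_iff_constantCoeff, ← hasProd_one.unique h₀]
  exact isUnit_one

theorem hasProd_genFun_odd_distinct [T2Space R] :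
    HasProd (fun i ↦ if Even i then 1 + X ^ (i + 1) else 1)
      (Nat.Partition.genFun fun i c ↦ if Odd i ∧ c = 1 then (1 : R) else 0) := by
  refine (Nat.Partition.hasProd_genFun _).congr_fun fun i ↦ ?_
  rw [tsum_eq_single 0 fun j hj ↦ by simp [hj]]
  simp only [Nat.odd_add_one, Nat.not_odd_iff_even, zero_add, and_true, ite_smul, one_smul,
    zero_smul, mul_one]
  split_ifs <;> simp

variable [IsTopologicalRing R] [T2Space R]

theorem tprod_one_sub_pow_odd_mul_tprod_one_add_pow {φ : R⟦X⟧} (hφ : X ∣ φ) :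
    (∏' m, (1 - φ ^ (2 * m + 1))) * ∏' m, (1 + φ ^ (m + 1)) = 1 := by
  have hsub : Multipliable fun m ↦ 1 - φ ^ (m + 1) := multipliable_one_sub_pow hφ fun m ↦ by omega
  have hsplit : HasProd (fun m ↦ 1 - φ ^ (m + 1))
      ((∏' m, (1 - φ ^ (2 * m + 1))) * ∏' m, (1 - φ ^ (2 * (m + 1)))) :=
    .even_mul_odd (f := fun m ↦ 1 - φ ^ (m + 1))
      (multipliable_one_sub_pow (k := fun m ↦ 2 * m + 1) hφ fun m ↦ by omega).hasProd
      (by convert (multipliable_one_sub_pow (k := fun m ↦ 2 * (m + 1)) hφ fun m ↦ by omega).hasProd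
            using 4; ring)
  have hsq : HasProd (fun m ↦ 1 - φ ^ (2 * (m + 1)))
      ((∏' m, (1 + φ ^ (m + 1))) * ∏' m, (1 - φ ^ (m + 1))) := by
    convert (multipliable_one_add_pow (k := (· + 1)) hφ fun m ↦ by omega).hasProd.mul hsub.hasProd
      using 2 with m
    ring
  rw [← (isUnit_tprod_one_sub_of_X_dvd hsub fun m ↦ dvd_pow hφ m.succ_ne_zero).mul_eq_right,
    mul_assoc, ← hsq.tprod_eq, ← hsplit.tprod_eq]

theorem hasProd_genFun_neg_one_pow :
    HasProd (fun i ↦ ∑' j, (-(-X : R⟦X⟧) ^ (i + 1)) ^ j)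
      (Nat.Partition.genFun fun i c ↦ ((-1 : R) ^ (i + 1)) ^ c) := by
  refine (Nat.Partition.hasProd_genFun _).congr_fun fun i ↦ ?_
  have hr : constantCoeff (-(-X : R⟦X⟧) ^ (i + 1)) = 0 := by simp
  rw [(summable_pow_of_constantCoeff_eq_zero hr).tsum_eq_zero_add, pow_zero]
  refine congrArg (1 + ·) (tsum_congr fun j ↦ ?_)
  rw [smul_eq_C_mul]
  simp only [map_pow, map_neg, map_one]
  ring

end PiTopology

section GenFun

variable (R : Type*) [CommRing R]

theorem genFun_neg_one_pow_eq_genFun_odd_distinct :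
    (Nat.Partition.genFun fun i c ↦ ((-1 : R) ^ (i + 1)) ^ c) =
      Nat.Partition.genFun fun i c ↦ if Odd i ∧ c = 1 then (1 : R) else 0 := by
  -- The statement involves no topology; the discrete one makes the infinite products available.
  let _ : TopologicalSpace R := ⊥
  have _ : DiscreteTopology R := ⟨rfl⟩
  set F := Nat.Partition.genFun fun i c ↦ ((-1 : R) ^ (i + 1)) ^ c
  set G := Nat.Partition.genFun fun i c ↦ if Odd i ∧ c = 1 then (1 : R) else 0
  set C := ∏' i, (1 + (-X : R⟦X⟧) ^ (i + 1))
  have hC : HasProd (fun i ↦ 1 + (-X : R⟦X⟧) ^ (i + 1)) C :=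
    (multipliable_one_add_pow (k := (· + 1)) (dvd_neg.mpr dvd_rfl) fun i ↦ by omega).hasProd
  have hFC : F * C = 1 := by
    refine (hasProd_genFun_neg_one_pow.mul hC).unique (hasProd_one.congr_fun fun i ↦ ?_)
    rw [← sub_neg_eq_add 1]
    exact tsum_pow_mul_one_sub_of_constantCoeff_eq_zero (by simp)
  have hGC : G * C = 1 := by
    have hX2 : X ∣ (X ^ 2 : R⟦X⟧) := dvd_pow_self X two_ne_zero
    refine ((hasProd_genFun_odd_distinct.mul hC).unique (.even_mul_odd ?_ ?_)).trans
      (tprod_one_sub_pow_odd_mul_tprod_one_add_pow hX2)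
    · convert (multipliable_one_sub_pow (k := fun m ↦ 2 * m + 1) hX2 fun m ↦ by omega).hasProd
        using 2 with m
      simp only [even_two_mul, if_true]
      rw [(odd_two_mul_add_one m).neg_pow]
      ring
    · convert (multipliable_one_add_pow (k := (· + 1)) hX2 fun m ↦ by omega).hasProd using 2 with m
      simp only [Nat.not_even_two_mul_add_one, if_false]
      rw [Even.neg_pow ⟨m + 1, by ring⟩]
      ring
  calc F = F * (G * C) := by rw [hGC, mul_one]
    _ = G * (F * C) := by ring
    _ = G := by rw [hFC, mul_one]

variable {R}

theorem coeff_genFun_neg_one_pow (n : ℕ) :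
    coeff n (Nat.Partition.genFun fun i c ↦ ((-1 : R) ^ (i + 1)) ^ c) =
      ∑ p : n.Partition, (-1) ^ (n + p.parts.card) := by
  classical
  rw [Nat.Partition.coeff_genFun]
  refine sum_congr rfl fun p _ ↦ ?_
  have hsum : (p.parts.map fun i ↦ i + 1).sum = n + p.parts.card := by
    simp [Multiset.sum_map_add, p.parts_sum]
  rw [← hsum, sum_multiset_map_count, ← prod_pow_eq_pow_sum, Finsupp.prod,
    Multiset.toFinsupp_support]
  refine prod_congr rfl fun i _ ↦ ?_
  rw [Multiset.toFinsupp_apply, smul_eq_mul, ← pow_mul, mul_comm]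

open scoped Classical in
theorem coeff_genFun_odd_distinct (n : ℕ) :
    coeff n (Nat.Partition.genFun fun i c ↦ if Odd i ∧ c = 1 then (1 : R) else 0) =
      #{p : n.Partition | (∀ x ∈ p.parts, Odd x) ∧ p.parts.Nodup} := by
  rw [Nat.Partition.coeff_genFun, ← sum_boole]
  refine sum_congr rfl fun p _ ↦ ?_
  rw [Finsupp.prod, prod_boole]
  simp only [Multiset.toFinsupp_support, Multiset.toFinsupp_apply, Multiset.mem_toFinset,
    Multiset.nodup_iff_count_eq_one, ← forall_and]

end GenFun

open scoped Classical in
theorem sum_neg_one_pow_eq_card_distinct_odd_partitions_general (n : ℕ) :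
    (∑ lam : Nat.Partition n, (-1 : ℤ) ^ (n + lam.parts.card)) =
      ((Finset.univ.filter fun lam : Nat.Partition n =>
          (∀ x ∈ lam.parts, Odd x) ∧ lam.parts.Nodup).card : ℤ) := by
  have h := congrArg (coeff n) (genFun_neg_one_pow_eq_genFun_odd_distinct ℤ)
  rwa [coeff_genFun_neg_one_pow, coeff_genFun_odd_distinct] at h

open scoped Classical in
/-- `∑_{λ ⊢ n} (-1)^{n+ℓ(λ)}` equals the number of partitions of `n` into pairwise distinct
odd parts, i.e. the value `A_n(-1)` of `A_n(q) = ∑_{λ ⊢ n} q^{n+ℓ(λ)}` at `q = -1`. -/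
theorem sum_neg_one_pow_eq_card_distinct_odd_partitions (n : ℕ) (hn : 1 ≤ n) :
    (∑ lam : Nat.Partition n, (-1 : ℤ) ^ (n + lam.parts.card)) =
      ((Finset.univ.filter fun lam : Nat.Partition n =>
          (∀ x ∈ lam.parts, Odd x) ∧ lam.parts.Nodup).card : ℤ) :=
  sum_neg_one_pow_eq_card_distinct_odd_partitions_general n
end

section
/- For all integers n ≥ 1 and i ≥ 0, the number of divisors d of n satisfying (i + √(2n+i²))/2 < d ≤ i + √(2n+i²) equals Σ (−1)^{k−1}, where the sum is over all pairs of positive integers (k,m) with km = 2n, k < m, k and m of different parity, and m − k ≥ 2i + 1. -/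
/-!
Write `R = i + √(2n + i²)`, the positive root of `x² - 2ix - 2n`. For `km = 2n` the conditions
`k < m`, `m - k ≥ 2i + 1` say exactly `R < m`, and a pair of opposite parity contributes `+1` when
`k` is odd and `-1` when `m` is odd; so the signed sum is the number of divisors `m > R` of `2n`
with odd codivisor minus the number of odd divisors `m > R` of `2n`.

On the other side, `R/2 < d ≤ R` is `[R < 2d] - [R < d]`. Doubling maps the divisors of `n`
onto the even divisors of `2n`, and the divisors of `n` are the divisors of `2n` with even
codivisor; splitting the divisors `m > R` of `2n` once by the parity of `m` and once by the
parity of `2n/m` yields the identity.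
-/

open Finset

noncomputable def upperRoot (n i : ℕ) : ℝ := i + √(2 * n + i ^ 2)

theorem upperRoot_lt_natCast_iff (n i m : ℕ) :
    upperRoot n i < m ↔ 2 * n + 2 * i * m < m * m := by
  by_cases him : i < m
  · have hpos : (0 : ℝ) < m - i := sub_pos.mpr (Nat.cast_lt.mpr him)
    rw [upperRoot, ← lt_sub_iff_add_lt', Real.sqrt_lt' hpos, ← Nat.cast_lt (α := ℝ)]
    push_cast
    constructor <;> intro h <;> nlinarith
  · have hiR : (i : ℝ) ≤ upperRoot n i := le_add_of_nonneg_right (Real.sqrt_nonneg _)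
    have hmi : (m : ℝ) ≤ i := by exact_mod_cast not_lt.mp him
    have hsq : m * m ≤ 2 * n + 2 * i * m := by nlinarith [not_lt.mp him]
    constructor <;> intro h <;> [linarith; omega]

theorem lt_and_le_sub_iff_upperRoot_lt {n i k m : ℕ} (hkm : k * m = 2 * n) (hm : 0 < m) :
    (k < m ∧ 2 * i + 1 ≤ m - k) ↔ upperRoot n i < m := by
  rw [upperRoot_lt_natCast_iff, ← hkm, show k * m + 2 * i * m = (k + 2 * i) * m by ring,
    Nat.mul_lt_mul_right hm]
  omega

theorem card_filter_and_add_card_filter_and_not {α : Type*} (s : Finset α) (q p : α → Prop)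
    [DecidablePred q] [DecidablePred p] :
    #(s.filter fun a => q a ∧ p a) + #(s.filter fun a => q a ∧ ¬ p a) = #(s.filter q) := by
  rw [← card_filter_add_card_filter_not (s := s.filter q) p, filter_filter, filter_filter]

theorem card_lt_add_card_halfWindow (s : Finset ℕ) (R : ℝ) :
    #(s.filter fun d : ℕ => R < d) + #(s.filter fun d : ℕ => R / 2 < d ∧ d ≤ R) =
      #(s.filter fun d : ℕ => R < 2 * d) := by
  rw [← card_filter_and_add_card_filter_and_not s (fun d : ℕ => R < 2 * d) (R < ·)]
  have hd (d : ℕ) : (0 : ℝ) ≤ d := d.cast_nonneg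
  congr 2 <;> refine filter_congr fun d _ => ?_
  · exact ⟨fun h => ⟨by linarith [hd d], h⟩, And.right⟩
  · rw [not_lt]; constructor <;> rintro ⟨h₁, h₂⟩ <;> constructor <;> linarith

theorem dvd_iff_dvd_two_mul_and_even_div {m n : ℕ} :
    m ∣ n ↔ m ∣ 2 * n ∧ Even (2 * n / m) := by
  constructor
  · rintro ⟨t, rfl⟩
    rcases m.eq_zero_or_pos with rfl | hm
    · simp
    · refine ⟨Dvd.intro (2 * t) (by ring), ⟨t, ?_⟩⟩
      rw [show 2 * (m * t) = m * (2 * t) by ring, Nat.mul_div_cancel_left _ hm]; ring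
  · rintro ⟨hdvd, t, ht⟩
    rcases m.eq_zero_or_pos with rfl | hm
    · simp_all
    · refine ⟨t, ?_⟩
      have hmul := Nat.div_mul_cancel hdvd
      rw [ht] at hmul
      nlinarith

theorem card_filter_divisors_lt_two_mul (n : ℕ) (R : ℝ) :
    #(n.divisors.filter fun d : ℕ => R < 2 * d) =
      #((2 * n).divisors.filter fun m : ℕ => R < m ∧ Even m) := by
  refine card_bij' (fun d _ => 2 * d) (fun m _ => m / 2) ?_ ?_ ?_ ?_
  · intro d hd
    simp only [mem_filter, Nat.mem_divisors] at hd ⊢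
    exact ⟨⟨mul_dvd_mul_left 2 hd.1.1, by omega⟩, by push_cast; exact hd.2, even_two_mul d⟩
  · intro m hm
    obtain ⟨⟨hdvd, hn⟩, hR, heven⟩ := by simpa only [mem_filter, Nat.mem_divisors] using hm
    obtain ⟨t, rfl⟩ := heven.two_dvd
    simp only [mem_filter, Nat.mem_divisors, Nat.mul_div_cancel_left t two_pos]
    exact ⟨⟨Nat.dvd_of_mul_dvd_mul_left two_pos hdvd, by omega⟩, by exact_mod_cast hR⟩
  · intro d _; simp
  · intro m hm
    obtain ⟨t, rfl⟩ := (mem_filter.mp hm).2.2.two_dvd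
    simp

theorem filter_divisors_even_div_eq (n : ℕ) (R : ℝ) :
    ((2 * n).divisors.filter fun m : ℕ => R < m ∧ Even (2 * n / m)) =
      n.divisors.filter fun d : ℕ => R < d := by
  ext m
  simp only [mem_filter, Nat.mem_divisors, dvd_iff_dvd_two_mul_and_even_div (n := n),
    show 2 * n ≠ 0 ↔ n ≠ 0 by omega]
  tauto

theorem card_halfWindow_divisors_add_card_odd (n : ℕ) (R : ℝ) :
    #(n.divisors.filter fun d : ℕ => R / 2 < d ∧ d ≤ R) +
        #((2 * n).divisors.filter fun m : ℕ => R < m ∧ Odd m) =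
      #((2 * n).divisors.filter fun m : ℕ => R < m ∧ Odd (2 * n / m)) := by
  have hwindow := card_lt_add_card_halfWindow n.divisors R
  have hdouble := card_filter_divisors_lt_two_mul n R
  have hhalf := congrArg card (filter_divisors_even_div_eq n R)
  have hparity := card_filter_and_add_card_filter_and_not (2 * n).divisors (R < ·) Even
  have hcoparity := card_filter_and_add_card_filter_and_not (2 * n).divisors (R < ·)
    fun m => Even (2 * n / m)
  simp only [Nat.not_even_iff_odd] at hparity hcoparity
  omega

theorem ite_parity_neg_one_pow {k m : ℕ} (hk : k ≠ 0) (heven : Even (k * m)) :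
    (if ¬ (k % 2 = m % 2) then (-1 : ℤ) ^ (k - 1) else 0) =
      (if Odd k then 1 else 0) - (if Odd m then 1 else 0) := by
  rcases Nat.even_or_odd k with hke | hko <;> rcases Nat.even_or_odd m with hme | hmo
  · simp [Nat.even_iff.mp hke, Nat.even_iff.mp hme, Nat.not_odd_iff_even.mpr hke,
      Nat.not_odd_iff_even.mpr hme]
  · have hpred : Odd (k - 1) := by rcases hke with ⟨t, rfl⟩; exact ⟨t - 1, by omega⟩
    simp [Nat.even_iff.mp hke, Nat.odd_iff.mp hmo, hpred.neg_one_pow, hmo,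
      Nat.not_odd_iff_even.mpr hke]
  · have hpred : Even (k - 1) := by rcases hko with ⟨t, rfl⟩; exact ⟨t, by omega⟩
    simp [Nat.odd_iff.mp hko, Nat.even_iff.mp hme, hpred.neg_one_pow, hko,
      Nat.not_odd_iff_even.mpr hme]
  · exact absurd heven (Nat.not_even_iff_odd.mpr (hko.mul hmo))

theorem signed_sum_eq_card_sub_card (n i : ℕ) :
    ∑ p ∈ (Nat.divisorsAntidiagonal (2 * n)).filter
        (fun p => p.1 < p.2 ∧ ¬ (p.1 % 2 = p.2 % 2) ∧ 2 * i + 1 ≤ p.2 - p.1),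
      (-1 : ℤ) ^ (p.1 - 1) =
    #((2 * n).divisors.filter fun m : ℕ => upperRoot n i < m ∧ Odd (2 * n / m)) -
      #((2 * n).divisors.filter fun m : ℕ => upperRoot n i < m ∧ Odd m) := by
  rw [sum_filter, Nat.sum_divisorsAntidiagonal' fun k m =>
      if k < m ∧ ¬ (k % 2 = m % 2) ∧ 2 * i + 1 ≤ m - k then (-1 : ℤ) ^ (k - 1) else 0,
    natCast_card_filter, natCast_card_filter, ← sum_sub_distrib]
  refine sum_congr rfl fun m hm => ?_
  have hkm : 2 * n / m * m = 2 * n := Nat.div_mul_cancel (Nat.dvd_of_mem_divisors hm)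
  have hm0 : 0 < m := Nat.pos_of_mem_divisors hm
  have hk0 : 2 * n / m ≠ 0 := by
    intro h; rw [h, zero_mul] at hkm; exact (Nat.mem_divisors.mp hm).2 hkm.symm
  have hcond := lt_and_le_sub_iff_upperRoot_lt (i := i) hkm hm0
  rw [if_congr (show _ ↔ upperRoot n i < m ∧ ¬ (2 * n / m % 2 = m % 2) by tauto) rfl rfl,
    ite_and, ite_and, ite_and]
  by_cases hR : upperRoot n i < m
  · simp only [hR, ↓reduceIte]
    exact ite_parity_neg_one_pow hk0 (by rw [hkm]; exact even_two_mul n)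
  · simp only [hR, ↓reduceIte, sub_self]

-- The filter in `aCoeff` runs over `n.divisors` pushed into `Finset ℝ` by the monad structure.
theorem aCoeff_eq_card_s18 (n i : ℕ) :
    aCoeff n i =
      #(n.divisors.filter fun d : ℕ => upperRoot n i / 2 < d ∧ d ≤ upperRoot n i) := by
  classical
  rw [aCoeff, ← upperRoot, bind_pure_comp, fmap_def, filter_image]
  exact card_image_of_injective _ Nat.cast_injective

theorem aCoeff_eq_signed_sum_general (n i : ℕ) :
    (aCoeff n i : ℤ) =
      ∑ p ∈ (Nat.divisorsAntidiagonal (2 * n)).filter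
          (fun p => p.1 < p.2 ∧ ¬ (p.1 % 2 = p.2 % 2) ∧ 2 * i + 1 ≤ p.2 - p.1),
        (-1 : ℤ) ^ (p.1 - 1) := by
  rw [signed_sum_eq_card_sub_card, aCoeff_eq_card_s18,
    ← card_halfWindow_divisors_add_card_odd]
  push_cast
  ring

/-- `a_{n,i} = ∑ (-1)^{k-1}`, the sum being over pairs `(k,m)` of positive integers with
`km = 2n`, `k < m`, `k ≢ m (mod 2)`, and `m - k ≥ 2i + 1`. -/
theorem aCoeff_eq_signed_sum (n i : ℕ) (hn : 1 ≤ n) :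
    (aCoeff n i : ℤ) =
      ∑ p ∈ (Nat.divisorsAntidiagonal (2 * n)).filter
          (fun p => p.1 < p.2 ∧ ¬ (p.1 % 2 = p.2 % 2) ∧ 2 * i + 1 ≤ p.2 - p.1),
        (-1 : ℤ) ^ (p.1 - 1) :=
  aCoeff_eq_signed_sum_general n i
end

section
/- For every integer n ≥ 1, the coefficient of t^n in the formal power series Π_{i≥1} (1−t^i)²·(1+t^{2i})⁻¹ over ℤ (equivalently, for every n, the coefficient of t^n in the finite product Π_{i=1}^{n} (1−t^i)²·(1+t^{2i})⁻¹) equals Σ_{(x,y) ∈ ℤ², x²+2y²=n} (−1)^{x+y}; in particular its absolute value equals the number of pairs (x,y) ∈ ℤ × ℤ with x² + 2y² = n. -/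
/-!
With `(a; q)_n = ∏_{i<n} (1 - a q^i)` and `φ(q) = ∑_{k ∈ ℤ} q^{k²}`, Gauss's identity
`φ(-q) = (q²; q²)_∞ (q; q²)_∞²` at `q` and at `q²`, together with the rearrangements
`(q²; q²)(-q²; q²) = (q⁴; q⁴)`, `(q⁴; q⁴)(q²; q⁴) = (q²; q²)` and `(q²; q²)(q; q²) = (q; q)`, gives
`(q; q)_∞² = φ(-q) φ(-q²) (-q²; q²)_∞`, i.e. the product in question is `φ(-q) φ(-q²)`.
Everything is done with finite products modulo `q^(n+1)`. Gauss's identity comes from the finite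
Jacobi triple product `∑_{|k| ≤ n} (-1)^k q^{k²} [2n, n+k]_{q²} = (q; q²)_n²`, since
`(q²; q²)_n [2n, n+k]_{q²} ≡ 1` modulo `q^{2(n-|k|+1)}` and `k² + 2(n - |k| + 1) ≥ 2n + 1`.
For the absolute value: all signs `(-1)^(x+y)` with `x² + 2y² = n` agree, as
`2(x + y) ≡ n(n + 1) (mod 4)`.
-/

open Finset

variable {R : Type*}

section QBinomial

variable [CommSemiring R] (t : R)

/-- The Gaussian binomial coefficient `[m, k]_t`, extended by zero to all `k : ℤ`; the `toNat`
in the recursion only truncates in terms that vanish. -/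
def qBinom : ℕ → ℤ → R
  | 0, k => if k = 0 then 1 else 0
  | m + 1, k => qBinom m k + t ^ (m + 1 - k).toNat * qBinom m (k - 1)

lemma qBinom_succ (m : ℕ) (k : ℤ) :
    qBinom t (m + 1) k = qBinom t m k + t ^ (m + 1 - k).toNat * qBinom t m (k - 1) := rfl

lemma qBinom_eq_zero_of_neg {k : ℤ} (hk : k < 0) (m : ℕ) : qBinom t m k = 0 := by
  induction m generalizing k with
  | zero => simp [qBinom, hk.ne]
  | succ m ih => simp [qBinom_succ, ih hk, ih (show k - 1 < 0 by omega)]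

lemma qBinom_eq_zero_of_lt {m : ℕ} {k : ℤ} (hk : m < k) : qBinom t m k = 0 := by
  induction m generalizing k with
  | zero => simp only [qBinom, ite_eq_right_iff]; omega
  | succ m ih =>
    simp [qBinom_succ, ih (show (m : ℤ) < k by omega), ih (show (m : ℤ) < k - 1 by omega)]

lemma qBinom_eq_zero_of_notMem {m : ℕ} {k : ℤ} (hk : k ∉ Icc 0 (m : ℤ)) : qBinom t m k = 0 := by
  rcases lt_or_ge k 0 with h | h
  · exact qBinom_eq_zero_of_neg t h m
  · exact qBinom_eq_zero_of_lt t (by simp only [mem_Icc, not_and, not_le] at hk; omega)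

@[simp]
lemma qBinom_zero_right (m : ℕ) : qBinom t m 0 = 1 := by
  induction m with
  | zero => simp [qBinom]
  | succ m ih => simp [qBinom_succ, ih, qBinom_eq_zero_of_neg]

@[simp]
lemma qBinom_self (m : ℕ) : qBinom t m m = 1 := by
  induction m with
  | zero => simp [qBinom]
  | succ m ih => simp [qBinom_succ, ih, qBinom_eq_zero_of_lt]

lemma qBinom_succ' (m : ℕ) (k : ℤ) :
    qBinom t (m + 1) k = t ^ k.toNat * qBinom t m k + qBinom t m (k - 1) := by
  induction m generalizing k with
  | zero =>
    rcases eq_or_ne k 0 with rfl | h0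
    · simp [qBinom]
    rcases eq_or_ne k 1 with rfl | h1
    · simp [qBinom]
    · simp [qBinom, h0, h1, sub_eq_zero]
  | succ m ih =>
    by_cases hk : k ∈ Icc 1 (m + 1 : ℤ)
    · obtain ⟨i, l, rfl, rfl⟩ : ∃ i l : ℕ, k = i + 1 ∧ m = i + l := by
        simp only [mem_Icc] at hk
        exact ⟨(k - 1).toNat, m - (k - 1).toNat, by omega, by omega⟩
      conv_lhs => rw [qBinom_succ, ih, ih]
      conv_rhs => rw [qBinom_succ, qBinom_succ]
      rw [show (((i + l + 1 : ℕ) : ℤ) + 1 - ((i : ℤ) + 1)).toNat = l + 1 by omega,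
        show (((i + l : ℕ) : ℤ) + 1 - ((i : ℤ) + 1)).toNat = l by omega,
        show (((i + l : ℕ) : ℤ) + 1 - ((i : ℤ) + 1 - 1)).toNat = l + 1 by omega,
        show ((i : ℤ) + 1 - 1).toNat = i by omega, show ((i : ℤ) + 1).toNat = i + 1 by omega]
      ring
    · obtain hk | rfl | rfl | hk : k < 0 ∨ k = 0 ∨ k = m + 2 ∨ m + 2 < k := by
        simp only [mem_Icc] at hk; omega
      · simp [qBinom_eq_zero_of_neg t hk, qBinom_eq_zero_of_neg t (show k - 1 < 0 by omega)]
      · simp [qBinom_eq_zero_of_neg]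
      · rw [qBinom_eq_zero_of_lt t (show ((m + 1 : ℕ) : ℤ) < m + 2 by omega),
          show (m : ℤ) + 2 - 1 = (m + 1 : ℕ) by push_cast; ring,
          show (m : ℤ) + 2 = (m + 1 + 1 : ℕ) by push_cast; ring, qBinom_self, qBinom_self]
        simp
      · simp [qBinom_eq_zero_of_lt t (show ((m + 1 + 1 : ℕ) : ℤ) < k by omega),
          qBinom_eq_zero_of_lt t (show ((m + 1 : ℕ) : ℤ) < k by omega),
          qBinom_eq_zero_of_lt t (show ((m + 1 : ℕ) : ℤ) < k - 1 by omega)]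

lemma qBinom_symm (m : ℕ) (k : ℤ) : qBinom t m (m - k) = qBinom t m k := by
  induction m generalizing k with
  | zero =>
    rcases eq_or_ne k 0 with rfl | hk
    · simp
    · simp [qBinom, hk]
  | succ m ih =>
    rw [qBinom_succ, qBinom_succ', show ((m + 1 : ℕ) : ℤ) - k = m - (k - 1) by push_cast; ring,
      show (m : ℤ) + 1 - (m - (k - 1)) = k by ring, show (m : ℤ) - (k - 1) - 1 = m - k by ring,
      ih, ih, add_comm]

lemma qBinom_add_two (m : ℕ) (k : ℤ) :
    qBinom t (m + 2) (k + 1) = t ^ (k + 1).toNat * qBinom t m (k + 1)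
      + (1 + t ^ (m + 1)) * qBinom t m k + t ^ (m + 1 - k).toNat * qBinom t m (k - 1) := by
  rw [qBinom_succ, qBinom_succ', qBinom_succ', add_sub_cancel_right,
    show ((m + 1 : ℕ) : ℤ) + 1 - (k + 1) = m + 1 - k by push_cast; ring]
  by_cases hk : k ∈ Icc 0 (m : ℤ)
  · have hexp : (m + 1 - k : ℤ).toNat + k.toNat = m + 1 := by simp only [mem_Icc] at hk; omega
    rw [← hexp, pow_add]
    ring
  · simp [qBinom_eq_zero_of_notMem t hk]

end QBinomial

lemma prod_Icc_one_eq_prod_range {M : Type*} [CommMonoid M] (f : ℕ → M) (n : ℕ) :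
    ∏ i ∈ Icc 1 n, f i = ∏ i ∈ range n, f (i + 1) := by
  induction n with
  | zero => simp
  | succ n ih => rw [prod_Icc_succ_top (by omega), ih, prod_range_succ]

section QPochhammer

variable [CommRing R]

/-- The `q`-Pochhammer symbol `(a; q)_n`. -/
def qPochhammer (a q : R) (n : ℕ) : R := ∏ i ∈ range n, (1 - a * q ^ i)

variable (a q : R)

@[simp]
lemma qPochhammer_zero : qPochhammer a q 0 = 1 := by simp [qPochhammer]

lemma qPochhammer_succ (n : ℕ) : qPochhammer a q (n + 1) = qPochhammer a q n * (1 - a * q ^ n) :=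
  prod_range_succ _ n

lemma qPochhammer_succ' (n : ℕ) : qPochhammer a q (n + 1) = (1 - a) * qPochhammer (a * q) q n := by
  simp [qPochhammer, prod_range_succ', pow_succ, mul_assoc, mul_comm]

lemma qPochhammer_add (m n : ℕ) :
    qPochhammer a q (m + n) = qPochhammer a q m * qPochhammer (a * q ^ m) q n := by
  simp [qPochhammer, prod_range_add, pow_add, mul_assoc]

lemma qPochhammer_two_mul (n : ℕ) :
    qPochhammer a q (2 * n) = qPochhammer a (q ^ 2) n * qPochhammer (a * q) (q ^ 2) n := by
  induction n with
  | zero => simp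
  | succ n ih =>
    rw [show 2 * (n + 1) = 2 * n + 1 + 1 by ring, qPochhammer_succ, qPochhammer_succ, ih,
      qPochhammer_succ, qPochhammer_succ]
    ring

lemma qPochhammer_mul_qPochhammer_neg (n : ℕ) :
    qPochhammer a q n * qPochhammer (-a) q n = qPochhammer (a ^ 2) (q ^ 2) n := by
  rw [qPochhammer, qPochhammer, ← prod_mul_distrib]
  exact prod_congr rfl fun i _ ↦ by ring

lemma qPochhammer_sModEq_one {I : Ideal R} (ha : a ∈ I) (n : ℕ) :
    qPochhammer a q n ≡ 1 [SMOD I] := by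
  have hfactor (i : ℕ) : 1 - a * q ^ i ≡ 1 [SMOD I] := by
    rw [SModEq.sub_mem, sub_sub_cancel_left, neg_mem_iff]
    exact I.mul_mem_right _ ha
  simpa [qPochhammer] using SModEq.prod fun i (_ : i ∈ range n) ↦ hfactor i

lemma qPochhammer_add_sModEq {I : Ideal R} {m : ℕ} (ha : a * q ^ m ∈ I) (n : ℕ) :
    qPochhammer a q (m + n) ≡ qPochhammer a q m [SMOD I] := by
  rw [qPochhammer_add]
  simpa using (SModEq.refl (qPochhammer a q m)).mul (qPochhammer_sModEq_one _ q ha n)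

lemma qBinom_mul_qPochhammer (t : R) {m j : ℕ} (hj : j ≤ m) :
    qBinom t m j * qPochhammer t t j = qPochhammer (t ^ (m + 1 - j)) t j := by
  induction m generalizing j with
  | zero => simp [Nat.le_zero.mp hj]
  | succ m ih =>
    obtain rfl | ⟨i, rfl⟩ : j = 0 ∨ ∃ i, j = i + 1 := by cases j <;> simp
    · simp
    obtain rfl | ⟨l, rfl⟩ : i = m ∨ ∃ l, m = i + 1 + l := by
      rcases eq_or_lt_of_le hj with h | h
      · exact .inl (by omega)
      · exact .inr ⟨m - (i + 1), by omega⟩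
    · simpa using congrArg (· * qPochhammer t t (i + 1)) (qBinom_self t (i + 1))
    rw [qBinom_succ, show ((i + 1 : ℕ) : ℤ) - 1 = i by push_cast; ring,
      show (((i + 1 + l : ℕ) : ℤ) + 1 - ((i + 1 : ℕ) : ℤ)).toNat = l + 1 by omega,
      add_mul, ih (by omega), qPochhammer_succ t t i, ← mul_assoc, mul_assoc _ (qBinom _ _ _),
      ih (by omega), qPochhammer_succ', qPochhammer_succ]
    rw [show i + 1 + l + 1 - (i + 1) = l + 1 by omega, show i + 1 + l + 1 - i = l + 2 by omega,
      show i + 1 + l + 1 + 1 - (i + 1) = l + 2 by omega]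
    rw [← pow_succ]
    ring

end QPochhammer

section Theta

variable [CommRing R]

lemma qPochhammer_mul_qBinom_sModEq_one (t : R) {n : ℕ} {k : ℤ} (hk : k.natAbs ≤ n) :
    qPochhammer t t n * qBinom t (2 * n) (n + k) ≡ 1
      [SMOD Ideal.span {t ^ (n - k.natAbs + 1)}] := by
  -- with `j = n - |k|`: `(t; t)_n [2n, j]_t = (t^(2n+1-j); t)_j (t^(j+1); t)_(n-j)`
  set j := n - k.natAbs
  have hsymm : qBinom t (2 * n) (n + k) = qBinom t (2 * n) j := by
    rcases le_or_gt 0 k with h | h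
    · rw [← qBinom_symm t _ (j : ℤ), show ((2 * n : ℕ) : ℤ) - j = n + k by omega]
    · rw [show (n : ℤ) + k = j by omega]
  have hmem {e : ℕ} (he : j + 1 ≤ e) : t ^ e ∈ Ideal.span {t ^ (j + 1)} :=
    Ideal.mem_span_singleton.mpr (pow_dvd_pow t he)
  have hsplit : qPochhammer t t n = qPochhammer t t j * qPochhammer (t * t ^ j) t (n - j) := by
    rw [← qPochhammer_add, Nat.add_sub_cancel' (by omega)]
  rw [hsymm, hsplit, mul_right_comm, mul_comm _ (qBinom _ _ _),
    qBinom_mul_qPochhammer t (show j ≤ 2 * n by omega), ← pow_succ', ← mul_one (1 : R)]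
  exact (qPochhammer_sModEq_one _ t (hmem (e := 2 * n + 1 - j) (by omega)) _).mul
    (qPochhammer_sModEq_one _ t (hmem le_rfl) _)

/-- The summands of the finite Jacobi triple product `sum_thetaTerm`. -/
def thetaTerm (q : R) (n : ℕ) (k : ℤ) : R :=
  k.negOnePow * q ^ k.natAbs ^ 2 * qBinom (q ^ 2) (2 * n) (n + k)

lemma thetaTerm_eq_zero (q : R) {n : ℕ} {k : ℤ} (hk : k ∉ Icc (-n : ℤ) n) :
    thetaTerm q n k = 0 := by
  rw [thetaTerm, qBinom_eq_zero_of_notMem _ (by simp only [mem_Icc] at hk ⊢; omega), mul_zero]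

lemma thetaTerm_succ (q : R) (n : ℕ) (k : ℤ) :
    thetaTerm q (n + 1) k = (1 + q ^ (2 * (2 * n + 1))) * thetaTerm q n k
      - q ^ (2 * n + 1) * (thetaTerm q n (k + 1) + thetaTerm q n (k - 1)) := by
  -- `qBinom_add_two`, where `k² + 2(n + 1 ± k) = (k ± 1)² + 2n + 1`
  have hup : (q ^ 2) ^ (n + k + 1).toNat * qBinom (q ^ 2) (2 * n) (n + k + 1) * q ^ k.natAbs ^ 2
      = q ^ (2 * n + 1) * (q ^ (k + 1).natAbs ^ 2 * qBinom (q ^ 2) (2 * n) (n + k + 1)) := by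
    by_cases h : 0 ≤ n + k + 1
    · have hexp : 2 * (n + k + 1).toNat + k.natAbs ^ 2 = 2 * n + 1 + (k + 1).natAbs ^ 2 := by
        zify
        rw [Int.toNat_of_nonneg h, sq_abs, sq_abs]
        ring
      rw [← pow_mul, mul_right_comm, ← pow_add, hexp, pow_add]
      ring
    · rw [qBinom_eq_zero_of_neg _ (by omega)]
      simp
  have hdown : (q ^ 2) ^ (n + 1 - k).toNat * qBinom (q ^ 2) (2 * n) (n + k - 1) * q ^ k.natAbs ^ 2
      = q ^ (2 * n + 1) * (q ^ (k - 1).natAbs ^ 2 * qBinom (q ^ 2) (2 * n) (n + k - 1)) := by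
    by_cases h : n + k - 1 ≤ 2 * n
    · have hexp : 2 * (n + 1 - k).toNat + k.natAbs ^ 2 = 2 * n + 1 + (k - 1).natAbs ^ 2 := by
        zify
        rw [Int.toNat_of_nonneg (by omega), sq_abs, sq_abs]
        ring
      rw [← pow_mul, mul_right_comm, ← pow_add, hexp, pow_add]
      ring
    · rw [qBinom_eq_zero_of_lt _ (by push_cast; omega)]
      simp
  simp only [thetaTerm, ← add_assoc, ← add_sub_assoc]
  rw [show ((n + 1 : ℕ) : ℤ) + k = n + k + 1 by push_cast; ring,
    show 2 * (n + 1) = 2 * n + 2 by ring, qBinom_add_two,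
    show ((2 * n : ℕ) : ℤ) + 1 - (n + k) = n + 1 - k by push_cast; ring,
    Int.negOnePow_succ, Int.negOnePow_sub, Int.negOnePow_one, ← pow_mul]
  push_cast
  linear_combination (k.negOnePow : R) * (hup + hdown)

lemma sum_Icc_comp_add_eq {M : Type*} [AddCommMonoid M] {f : ℤ → M} {n : ℕ}
    (hf : ∀ k ∉ Icc (-n : ℤ) n, f k = 0) {N : ℕ} (c : ℤ) (hN : n + c.natAbs ≤ N) :
    ∑ k ∈ Icc (-N : ℤ) N, f (k + c) = ∑ k ∈ Icc (-n : ℤ) n, f k := by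
  have hsupp : (Function.support fun k ↦ f (k + c)) ⊆ Icc (-N : ℤ) N := by
    refine Function.support_subset_iff'.mpr fun k hk ↦ hf _ ?_
    simp only [coe_Icc, Set.mem_Icc, mem_Icc] at hk ⊢
    omega
  rw [← finsum_eq_sum_of_support_subset _ hsupp,
    ← finsum_eq_sum_of_support_subset _ (Function.support_subset_iff'.mpr hf)]
  exact finsum_comp_equiv (Equiv.addRight c)

theorem sum_thetaTerm (q : R) (n : ℕ) :
    ∑ k ∈ Icc (-n : ℤ) n, thetaTerm q n k = qPochhammer q (q ^ 2) n ^ 2 := by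
  induction n with
  | zero => simp [thetaTerm]
  | succ n ih =>
    have hshift (c : ℤ) (hc : c.natAbs ≤ 1) :
        ∑ k ∈ Icc (-(n + 1 : ℕ) : ℤ) (n + 1 : ℕ), thetaTerm q n (k + c)
          = qPochhammer q (q ^ 2) n ^ 2 :=
      (sum_Icc_comp_add_eq (fun _ ↦ thetaTerm_eq_zero q) c (by omega)).trans ih
    have h0 := hshift 0 (by simp)
    have h1 := hshift 1 (by simp)
    have h2 := hshift (-1) (by simp)
    simp only [add_zero, ← sub_eq_add_neg] at h0 h2
    simp only [thetaTerm_succ, sum_sub_distrib, ← mul_sum, sum_add_distrib, h0, h1, h2,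
      qPochhammer_succ]
    ring

/-- A partial sum of `φ(-q)`. -/
noncomputable def thetaTrunc (q : R) (n : ℕ) : R :=
  ∑ k ∈ Icc (-n : ℤ) n, (k.negOnePow : R) * q ^ k.natAbs ^ 2

theorem thetaTrunc_sModEq (q : R) (n : ℕ) :
    thetaTrunc q n ≡ qPochhammer (q ^ 2) (q ^ 2) n * qPochhammer q (q ^ 2) n ^ 2
      [SMOD Ideal.span {q ^ (2 * n + 1)}] := by
  rw [thetaTrunc, ← sum_thetaTerm, mul_sum]
  refine SModEq.sum fun k hk ↦ ?_
  have hk : k.natAbs ≤ n := by simp only [mem_Icc] at hk; omega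
  have hterm := qPochhammer_mul_qBinom_sModEq_one (q ^ 2) hk
  rw [SModEq.sub_mem, Ideal.mem_span_singleton, ← pow_mul] at hterm
  have hexp : 2 * n + 1 ≤ k.natAbs ^ 2 + 2 * (n - k.natAbs + 1) := by
    zify [hk]; nlinarith [sq_nonneg ((k.natAbs : ℤ) - 1)]
  have hdiff : (k.negOnePow : R) * q ^ k.natAbs ^ 2
        - qPochhammer (q ^ 2) (q ^ 2) n * thetaTerm q n k
      = -((k.negOnePow : R) * q ^ k.natAbs ^ 2)
        * (qPochhammer (q ^ 2) (q ^ 2) n * qBinom (q ^ 2) (2 * n) (n + k) - 1) := by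
    rw [thetaTerm]; ring
  rw [SModEq.sub_mem, Ideal.mem_span_singleton, hdiff]
  calc q ^ (2 * n + 1) ∣ q ^ k.natAbs ^ 2 * q ^ (2 * (n - k.natAbs + 1)) := by
        rw [← pow_add]; exact pow_dvd_pow q hexp
    _ ∣ _ := mul_dvd_mul (dvd_neg.mpr (dvd_mul_left _ _)) hterm

lemma qPochhammer_sq_sModEq (q : R) (n : ℕ) :
    qPochhammer q q n ^ 2 ≡
      qPochhammer (q ^ 2) (q ^ 2) n * qPochhammer q (q ^ 2) n ^ 2
        * (qPochhammer ((q ^ 2) ^ 2) ((q ^ 2) ^ 2) n * qPochhammer (q ^ 2) ((q ^ 2) ^ 2) n ^ 2)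
        * qPochhammer (-q ^ 2) (q ^ 2) n [SMOD Ideal.span {q ^ (n + 1)}] := by
  have hmem {e : ℕ} (he : n + 1 ≤ e) : q ^ e ∈ Ideal.span {q ^ (n + 1)} :=
    Ideal.mem_span_singleton.mpr (pow_dvd_pow q he)
  have htail : qPochhammer q q (n + 3 * n) ≡ qPochhammer q q n [SMOD Ideal.span {q ^ (n + 1)}] :=
    qPochhammer_add_sModEq _ _ (by rw [← pow_succ']; exact hmem le_rfl) _
  have htail' : qPochhammer q (q ^ 2) (n + n) ≡ qPochhammer q (q ^ 2) n
      [SMOD Ideal.span {q ^ (n + 1)}] :=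
    qPochhammer_add_sModEq _ _ (by rw [← pow_mul, ← pow_succ']; exact hmem (by omega)) n
  have hsplit := qPochhammer_two_mul q q (n + n)
  have hsplit' := qPochhammer_two_mul (q ^ 2) (q ^ 2) n
  rw [← sq] at hsplit hsplit'
  calc qPochhammer q q n ^ 2
      ≡ qPochhammer q q (n + 3 * n) ^ 2 [SMOD Ideal.span {q ^ (n + 1)}] := (htail.pow 2).symm
    _ = (qPochhammer (q ^ 2) (q ^ 2) (n + n) * qPochhammer q (q ^ 2) (n + n)) ^ 2 := by
      rw [show n + 3 * n = 2 * (n + n) by ring, hsplit, mul_comm]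
    _ ≡ (qPochhammer (q ^ 2) (q ^ 2) (n + n) * qPochhammer q (q ^ 2) n) ^ 2
        [SMOD Ideal.span {q ^ (n + 1)}] := by gcongr
    _ = _ := by
      rw [← two_mul, hsplit', ← qPochhammer_mul_qPochhammer_neg (q ^ 2) (q ^ 2) n]
      ring

theorem prod_one_sub_pow_sq_sModEq (q : R) (n : ℕ) :
    ∏ i ∈ Icc 1 n, (1 - q ^ i) ^ 2 ≡
      thetaTrunc q n * thetaTrunc (q ^ 2) n * ∏ i ∈ Icc 1 n, (1 + q ^ (2 * i))
      [SMOD Ideal.span {q ^ (n + 1)}] := by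
  have hmono {x : R} (hx : q ^ (n + 1) ∣ x) : Ideal.span {x} ≤ Ideal.span {q ^ (n + 1)} :=
    Ideal.span_singleton_le_span_singleton.mpr hx
  have hq := (thetaTrunc_sModEq q n).mono (hmono (pow_dvd_pow q (by omega)))
  have hq2 := (thetaTrunc_sModEq (q ^ 2) n).mono
    (hmono (by rw [← pow_mul]; exact pow_dvd_pow q (by omega)))
  have hprod : ∏ i ∈ Icc 1 n, (1 - q ^ i) ^ 2 = qPochhammer q q n ^ 2 := by
    rw [prod_pow, prod_Icc_one_eq_prod_range, qPochhammer]
    simp [pow_succ']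
  have hprod' : ∏ i ∈ Icc 1 n, (1 + q ^ (2 * i)) = qPochhammer (-q ^ 2) (q ^ 2) n := by
    rw [prod_Icc_one_eq_prod_range, qPochhammer]
    simp [pow_succ', pow_mul]
  rw [hprod, hprod']
  exact (qPochhammer_sq_sModEq q n).trans ((hq.symm.mul hq2.symm).mul SModEq.rfl)

end Theta

lemma negOnePow_add_eq_of_sq_add_two_mul_sq_eq {x y x' y' : ℤ}
    (h : x ^ 2 + 2 * y ^ 2 = x' ^ 2 + 2 * y' ^ 2) : (x + y).negOnePow = (x' + y').negOnePow := by
  have key (x y : ℤ) :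
      ∃ u, (x ^ 2 + 2 * y ^ 2) * (x ^ 2 + 2 * y ^ 2 + 1) = 2 * (x + y) + 4 * u := by
    obtain ⟨a, ha⟩ := Int.even_mul_pred_self x
    obtain ⟨b, hb⟩ := Int.even_mul_pred_self y
    exact ⟨a * (a + x + 1) + b + x ^ 2 * y ^ 2 + y ^ 4,
      by linear_combination (x * (x - 1) + 2 * a + 2 * x + 2) * ha + 2 * hb⟩
  obtain ⟨u, hu⟩ := key x y
  obtain ⟨u', hu'⟩ := key x' y'
  rw [h] at hu
  exact (Int.negOnePow_eq_iff _ _).mpr ⟨u' - u, by linarith⟩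

lemma natAbs_sum_units_eq_card {α : Type*} {s : Finset α} {ε : α → ℤˣ}
    (h : ∀ a ∈ s, ∀ b ∈ s, ε a = ε b) : (∑ a ∈ s, (ε a : ℤ)).natAbs = #s := by
  rcases s.eq_empty_or_nonempty with rfl | ⟨a, ha⟩
  · simp
  rw [sum_congr rfl fun b hb ↦ congrArg Units.val (h b hb a ha), sum_const, nsmul_eq_mul,
    Int.natAbs_mul, Int.natAbs_natCast, Int.units_natAbs, mul_one]

lemma mem_Icc_of_sq_add_two_mul_sq_eq {x y : ℤ} {n : ℕ} (h : x ^ 2 + 2 * y ^ 2 = n) :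
    (x, y) ∈ Icc (-n : ℤ) n ×ˢ Icc (-n : ℤ) n := by
  have := Int.le_self_sq x
  have := Int.le_self_sq (-x)
  have := Int.le_self_sq y
  have := Int.le_self_sq (-y)
  simp only [mem_product, mem_Icc]
  refine ⟨⟨?_, ?_⟩, ?_, ?_⟩ <;> nlinarith

lemma natCard_sq_add_two_mul_sq_eq (n : ℕ) :
    Nat.card {p : ℤ × ℤ // p.1 ^ 2 + 2 * p.2 ^ 2 = (n : ℤ)} =
      #((Icc (-(n : ℤ)) n ×ˢ Icc (-(n : ℤ)) n).filter
        (fun p ↦ p.1 ^ 2 + 2 * p.2 ^ 2 = (n : ℤ))) := by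
  rw [← Nat.card_eq_finsetCard]
  exact Nat.card_congr (Equiv.subtypeEquivRight fun p ↦ by
    simpa using fun h ↦ mem_Icc_of_sq_add_two_mul_sq_eq h)

section PowerSeries

open PowerSeries

variable [CommRing R]

lemma coeff_eq_of_sModEq_X_pow {a b : R⟦X⟧} {N m : ℕ}
    (h : a ≡ b [SMOD Ideal.span {X ^ N}]) (hm : m < N) : coeff m a = coeff m b := by
  rw [SModEq.sub_mem, Ideal.mem_span_singleton, X_pow_dvd_iff] at h
  simpa [sub_eq_zero] using h m hm

lemma prod_mul_invOfUnit_sModEq (n : ℕ) :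
    ∏ i ∈ Icc 1 n, (1 - X ^ i : R⟦X⟧) ^ 2 * invOfUnit (1 + X ^ (2 * i)) 1 ≡
      thetaTrunc X n * thetaTrunc (X ^ 2) n [SMOD Ideal.span {X ^ (n + 1)}] := by
  have hinv : (∏ i ∈ Icc 1 n, (1 + X ^ (2 * i) : R⟦X⟧))
      * ∏ i ∈ Icc 1 n, invOfUnit (1 + X ^ (2 * i)) 1 = 1 := by
    rw [← prod_mul_distrib]
    refine prod_eq_one fun i hi ↦ mul_invOfUnit _ _ ?_
    simp only [mem_Icc] at hi
    simp [show 2 * i ≠ 0 by omega]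
  have h := (prod_one_sub_pow_sq_sModEq X n).mul
    (SModEq.refl (∏ i ∈ Icc 1 n, invOfUnit (1 + X ^ (2 * i) : R⟦X⟧) 1))
  rwa [mul_assoc, hinv, mul_one, ← prod_mul_distrib] at h

lemma coeff_thetaTrunc_X_mul_thetaTrunc_X_sq (n : ℕ) :
    coeff n (thetaTrunc (X : ℤ⟦X⟧) n * thetaTrunc (X ^ 2) n) =
      ∑ p ∈ (Icc (-(n : ℤ)) n ×ˢ Icc (-(n : ℤ)) n).filter (fun p ↦ p.1 ^ 2 + 2 * p.2 ^ 2 = (n : ℤ)),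
        ((p.1 + p.2).negOnePow : ℤ) := by
  rw [thetaTrunc, thetaTrunc, sum_mul_sum, ← sum_product', map_sum, sum_filter]
  refine sum_congr rfl fun p _ ↦ ?_
  have hterm : ((p.1.negOnePow : ℤ) : ℤ⟦X⟧) * X ^ p.1.natAbs ^ 2
      * (((p.2.negOnePow : ℤ) : ℤ⟦X⟧) * (X ^ 2) ^ p.2.natAbs ^ 2)
      = C ((p.1 + p.2).negOnePow : ℤ) * X ^ (p.1.natAbs ^ 2 + 2 * p.2.natAbs ^ 2) := by
    rw [Int.negOnePow_add, Units.val_mul, map_mul, eq_intCast, eq_intCast, ← pow_mul, pow_add]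
    ring
  have hiff : n = p.1.natAbs ^ 2 + 2 * p.2.natAbs ^ 2 ↔ p.1 ^ 2 + 2 * p.2 ^ 2 = n := by
    rw [eq_comm, ← Nat.cast_inj (R := ℤ)]; push_cast; rw [sq_abs, sq_abs]
  rw [hterm, coeff_C_mul_X_pow]
  exact if_congr hiff rfl rfl

end PowerSeries

theorem coeff_prod_eq_signed_count_general (n : ℕ) :
    PowerSeries.coeff (R := ℤ) n
        (∏ i ∈ Finset.Icc 1 n,
          (1 - PowerSeries.X ^ i) ^ 2 *
            PowerSeries.invOfUnit (1 + PowerSeries.X ^ (2 * i)) 1) =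
      (∑ p ∈ (Finset.Icc (-(n : ℤ)) (n : ℤ) ×ˢ Finset.Icc (-(n : ℤ)) (n : ℤ)).filter
          (fun p => p.1 ^ 2 + 2 * p.2 ^ 2 = (n : ℤ)),
        (((-1 : ℤˣ) ^ (p.1 + p.2) : ℤˣ) : ℤ)) ∧
    (PowerSeries.coeff (R := ℤ) n
        (∏ i ∈ Finset.Icc 1 n,
          (1 - PowerSeries.X ^ i) ^ 2 *
            PowerSeries.invOfUnit (1 + PowerSeries.X ^ (2 * i)) 1)).natAbs =
      Nat.card {p : ℤ × ℤ // p.1 ^ 2 + 2 * p.2 ^ 2 = (n : ℤ)} := by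
  rw [coeff_eq_of_sModEq_X_pow (prod_mul_invOfUnit_sModEq n) (Nat.lt_succ_self n),
    coeff_thetaTrunc_X_mul_thetaTrunc_X_sq, natCard_sq_add_two_mul_sq_eq]
  refine ⟨rfl, natAbs_sum_units_eq_card fun p hp p' hp' ↦ ?_⟩
  exact negOnePow_add_eq_of_sq_add_two_mul_sq_eq
    ((mem_filter.mp hp).2.trans (mem_filter.mp hp').2.symm)

/-- The coefficient of `t^n` in `∏_{i≥1} (1-t^i)²(1+t^{2i})⁻¹ ∈ ℤ[[t]]` (for `n ≥ 1` it only
involves the factors with `i ≤ n`) equals the signed count `∑_{x²+2y²=n} (-1)^{x+y}`, and its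
absolute value is the number of pairs `(x,y) ∈ ℤ²` with `x² + 2y² = n`. -/
theorem coeff_prod_eq_signed_count (n : ℕ) (hn : 1 ≤ n) :
    PowerSeries.coeff (R := ℤ) n
        (∏ i ∈ Finset.Icc 1 n,
          (1 - PowerSeries.X ^ i) ^ 2 *
            PowerSeries.invOfUnit (1 + PowerSeries.X ^ (2 * i)) 1) =
      (∑ p ∈ (Finset.Icc (-(n : ℤ)) (n : ℤ) ×ˢ Finset.Icc (-(n : ℤ)) (n : ℤ)).filter
          (fun p => p.1 ^ 2 + 2 * p.2 ^ 2 = (n : ℤ)),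
        (((-1 : ℤˣ) ^ (p.1 + p.2) : ℤˣ) : ℤ)) ∧
    (PowerSeries.coeff (R := ℤ) n
        (∏ i ∈ Finset.Icc 1 n,
          (1 - PowerSeries.X ^ i) ^ 2 *
            PowerSeries.invOfUnit (1 + PowerSeries.X ^ (2 * i)) 1)).natAbs =
      Nat.card {p : ℤ × ℤ // p.1 ^ 2 + 2 * p.2 ^ 2 = (n : ℤ)} :=
  coeff_prod_eq_signed_count_general n
end
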